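/- arXiv:2306.13938 — 5 statements merged into one kernel-verified Lean document; each statement's English description precedes it below -/
import Mathlib

section
/- Let I : [0,∞) → [0,∞) be nondecreasing and subadditive (I(h+h') ≤ I(h) + I(h') for all h, h' ≥ 0) with I(0) = 0. Then for every δ > 0, sup_{0 ≤ h ≤ δ} I(h) ≤ (3/δ) · ∫_0^δ I(h) dh. -/
/-- If I is nondecreasing, subadditive, nonnegative with I(0)=0, then
sup_{0 ≤ h ≤ δ} I(h) ≤ (3/δ) ∫_0^δ I(h) dh. -/
theorem stmt3 (I : ℝ → ℝ)
    (hnn : ∀ x : ℝ, 0 ≤ x → 0 ≤ I x)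
    (hmono : ∀ a b : ℝ, 0 ≤ a → a ≤ b → I a ≤ I b)
    (hsub : ∀ a b : ℝ, 0 ≤ a → 0 ≤ b → I (a + b) ≤ I a + I b)
    (h0 : I 0 = 0) :
    ∀ δ : ℝ, 0 < δ →
      (⨆ h : Set.Icc (0:ℝ) δ, I h.1) ≤ 3 / δ * ∫ h in (0:ℝ)..δ, I h := by
  intro δ hδ
  have hint : IntervalIntegrable I MeasureTheory.volume 0 δ := by
    apply MonotoneOn.intervalIntegrable
    intro a ha b hb hab
    rw [Set.uIcc_of_le hδ.le] at ha
    exact hmono a b ha.1 hab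
  have hint2 : IntervalIntegrable (fun h => I (δ - h)) MeasureTheory.volume 0 δ := by
    have := hint.comp_sub_left δ
    simpa using this.symm
  have hsum : ∫ h in (0:ℝ)..δ, I (δ - h) = ∫ h in (0:ℝ)..δ, I h := by
    have := intervalIntegral.integral_comp_sub_left (a := (0:ℝ)) (b := δ) I δ
    simpa using this
  have hIge : (0:ℝ) ≤ ∫ h in (0:ℝ)..δ, I h :=
    intervalIntegral.integral_nonneg hδ.le (fun x hx => hnn x hx.1)
  have h1 : ∫ _ in (0:ℝ)..δ, I δ ≤ ∫ h in (0:ℝ)..δ, (I h + I (δ - h)) := by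
    apply intervalIntegral.integral_mono_on hδ.le intervalIntegrable_const (hint.add hint2)
    intro x hx
    have : I δ = I (x + (δ - x)) := by ring_nf
    rw [this]
    exact hsub x (δ - x) hx.1 (by linarith [hx.2])
  have h2 : ∫ h in (0:ℝ)..δ, (I h + I (δ - h)) =
      (∫ h in (0:ℝ)..δ, I h) + ∫ h in (0:ℝ)..δ, I (δ - h) :=
    intervalIntegral.integral_add hint hint2
  have h3 : ∫ _ in (0:ℝ)..δ, I δ = δ * I δ := by
    simp [intervalIntegral.integral_const, smul_eq_mul]
  have key : δ * I δ ≤ 2 * ∫ h in (0:ℝ)..δ, I h := by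
    rw [← h3]
    calc ∫ _ in (0:ℝ)..δ, I δ ≤ ∫ h in (0:ℝ)..δ, (I h + I (δ - h)) := h1
      _ = 2 * ∫ h in (0:ℝ)..δ, I h := by rw [h2, hsum]; ring
  have hIδ : I δ ≤ 3 / δ * ∫ h in (0:ℝ)..δ, I h := by
    rw [div_mul_eq_mul_div, le_div_iff₀ hδ]
    nlinarith
  haveI : Nonempty (Set.Icc (0:ℝ) δ) := ⟨⟨0, by constructor <;> linarith⟩⟩
  apply ciSup_le
  intro h
  exact le_trans (hmono h.1 δ h.2.1 h.2.2) hIδ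
end

section
/- Let E ⊆ ℝ^n (n ≥ 1) be an F_σ set with |E| = t, 0 < t < ∞. Then for each j ∈ {1,...,n} there exist nested F_σ sets E = E_0 ⊇ E_1 ⊇ ⋯ ⊇ E_n with |E_j| = 2^{−j}·t, such that for every j = 1,...,n and every F_σ set A ⊆ E_{j−1} with |A| ≥ 2^{−j}·t, the (n−1)-dimensional Lebesgue measure of the orthogonal projection of E_j onto the hyperplane {x_j = 0} is at most that of the projection of A. -/
open MeasureTheory

/-- A set is F_σ if it is a countable union of closed sets. -/
def IsFsigma {X : Type*} [TopologicalSpace X] (s : Set X) : Prop :=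
  ∃ g : ℕ → Set X, (∀ i, IsClosed (g i)) ∧ s = ⋃ i, g i

/-- The orthogonal projection of ℝ^n onto the coordinate hyperplane x_j = 0,
identified with ℝ^{n-1}. -/
def projHyp {n : ℕ} (j : Fin n) (x : Fin n → ℝ) : {i : Fin n // i ≠ j} → ℝ :=
  fun i => x i.1

open Set Filter
open scoped ENNReal Topology

/-!
Each `E_j` is cut out of `F = E_{j-1}` by the same construction. Write `ℝ^n = H × ℝ` with `H`
the hyperplane `x_j = 0` and let `φ y` be the length of the fibre of `F` over `y ∈ H`, so that
`|A| ≤ ∫_{Π A} φ` for every `A ⊆ F`. Choose a level `0 < λ < ∞` and `Y ⊆ H` with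
`∫_Y φ = s = 2^{-j} t`, `φ ≥ λ` on `Y` and `φ ≤ λ` off `Y` (the level set `{φ = λ}` is split
using the Darboux property of Lebesgue measure), and let `E_j` be an F_σ subset of full measure
of `F ∩ Π⁻¹ Y`. If `A ⊆ F` and `|A| ≥ s`, then `∫_{Π A} φ ≥ ∫_Y φ`; comparing the two integrals
on `Y \ Π A`, where `φ ≥ λ`, and on `Π A \ Y`, where `φ ≤ λ`, gives `|Y| ≤ |Π A|`.
-/

theorem tendsto_measure_Iic_atBot (ν : Measure ℝ) [IsFiniteMeasure ν] :
    Tendsto (fun c => ν (Iic c)) atBot (𝓝 0) := by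
  have h := tendsto_measure_iInter_atBot (μ := ν) (fun c => measurableSet_Iic.nullMeasurableSet)
    (fun _ _ hab => Iic_subset_Iic.2 hab) ⟨0, measure_ne_top ν _⟩
  have hempty : ⋂ c : ℝ, Iic c = ∅ := by
    ext x; simpa using ⟨x - 1, by linarith⟩
  rwa [hempty, measure_empty] at h

theorem continuous_measureReal_Iic (ν : Measure ℝ) [IsFiniteMeasure ν] [NullSingletonClass ν] :
    Continuous fun c => ν.real (Iic c) := by
  refine continuous_iff_continuousAt.2 fun b => tendsto_iff_dist_tendsto_zero.2 ?_
  set M : ℝ → ℝ := fun c => ν.real (Icc (b - |c - b|) (b + |c - b|))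
  have hIic : ∀ c x y, |x - b| ≤ |c - b| → |y - b| ≤ |c - b| →
      ν.real (Iic x) ≤ ν.real (Iic y) + M c := by
    intro c x y hx hy
    refine (measureReal_mono fun z hz => ?_).trans (measureReal_union_le _ _)
    by_cases hzy : z ≤ y
    · exact Or.inl hzy
    · refine Or.inr ⟨?_, ?_⟩ <;> cases abs_le.1 hx <;> cases abs_le.1 hy <;>
        linarith [mem_Iic.1 hz, not_le.1 hzy]
  have hM : Tendsto M (𝓝 b) (𝓝 0) := by
    have hδ : Tendsto (fun c => |c - b|) (𝓝 b) (𝓝 0) := by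
      simpa using ((continuous_sub_right b).abs.tendsto b)
    exact (ENNReal.tendsto_toReal ENNReal.zero_ne_top).comp
      ((tendsto_measure_Icc ν b).comp hδ)
  refine squeeze_zero (fun _ => dist_nonneg) (fun c => ?_) hM
  rw [Real.dist_eq, abs_sub_le_iff]
  constructor <;> linarith [hIic c c b le_rfl (by simp), hIic c b c (by simp) le_rfl]

theorem exists_measure_Iic_eq (ν : Measure ℝ) [IsFiniteMeasure ν] [NullSingletonClass ν]
    {r : ℝ≥0∞} (hr0 : 0 < r) (hr : r < ν univ) : ∃ c, ν (Iic c) = r := by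
  have hrtop : r ≠ ∞ := (hr.trans_le le_top).ne
  have hreal : ∀ c, ν.real (Iic c) = r.toReal ↔ ν (Iic c) = r := fun c =>
    ENNReal.toReal_eq_toReal_iff' (measure_ne_top ν _) hrtop
  obtain ⟨a, ha⟩ := ((tendsto_measure_Iic_atBot ν).eventually (gt_mem_nhds hr0)).exists
  obtain ⟨b, hb⟩ := ((tendsto_measure_Iic_atTop ν).eventually (lt_mem_nhds hr)).exists
  obtain ⟨c, hc⟩ := intermediate_value_univ a b (continuous_measureReal_Iic ν)
    ⟨(ENNReal.toReal_le_toReal (measure_ne_top ν _) hrtop).2 ha.le,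
      (ENNReal.toReal_le_toReal hrtop (measure_ne_top ν _)).2 hb.le⟩
  exact ⟨c, (hreal c).1 hc⟩

def MeasureTheory.Measure.HasDarbouxProperty {α : Type*} [MeasurableSpace α] (μ : Measure α) :
    Prop :=
  ∀ ⦃S : Set α⦄, MeasurableSet S → μ S ≠ ∞ → ∀ r ≤ μ S, ∃ W ⊆ S, MeasurableSet W ∧ μ W = r

theorem MeasureTheory.Measure.hasDarbouxProperty_of_measure_preimage_singleton {α : Type*}
    [MeasurableSpace α] {μ : Measure α} {f : α → ℝ} (hf : Measurable f)
    (hfib : ∀ c, μ (f ⁻¹' {c}) = 0) :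
    μ.HasDarbouxProperty := by
  intro S hS hSfin r hr
  rcases hr.eq_or_lt with rfl | hr
  · exact ⟨S, subset_rfl, hS, rfl⟩
  rcases eq_zero_or_pos r with rfl | hr0
  · exact ⟨∅, empty_subset S, MeasurableSet.empty, measure_empty⟩
  set ν := (μ.restrict S).map f
  have hν : ∀ T, MeasurableSet T → ν T = μ (S ∩ f ⁻¹' T) := fun T hT => by
    rw [Measure.map_apply hf hT, Measure.restrict_apply (hf hT), inter_comm]
  have hνuniv : ν univ = μ S := by rw [hν univ .univ, preimage_univ, inter_univ]
  have : IsFiniteMeasure ν := ⟨hνuniv ▸ hSfin.lt_top⟩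
  have : NullSingletonClass ν := ⟨fun c => by
    rw [hν _ (measurableSet_singleton c)]; exact measure_mono_null inter_subset_right (hfib c)⟩
  obtain ⟨c, hc⟩ := exists_measure_Iic_eq ν hr0 (hνuniv ▸ hr)
  exact ⟨S ∩ f ⁻¹' Iic c, inter_subset_left, hS.inter (hf measurableSet_Iic),
    by rw [← hc, hν _ measurableSet_Iic]⟩

theorem MeasureTheory.Measure.hasDarbouxProperty_volume_pi {ι : Type*} [Fintype ι]
    [Nonempty ι] :
    (volume : Measure (ι → ℝ)).HasDarbouxProperty :=
  hasDarbouxProperty_of_measure_preimage_singleton (measurable_pi_apply (Classical.arbitrary ι))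
    fun c => by rw [volume_pi]; exact Measure.pi_hyperplane _ _ _

theorem exists_measure_lt_le_measure_le {α : Type*} [MeasurableSpace α] (ν : Measure α)
    [IsFiniteMeasure ν] {φ : α → ℝ≥0∞} (hφ : Measurable φ) {s : ℝ≥0∞} (hs : s ≤ ν univ) :
    ∃ l, ν {x | l < φ x} ≤ s ∧ s ≤ ν {x | l ≤ φ x} := by
  set T := {l | ν {x | l < φ x} ≤ s}
  have hT : ⊤ ∈ T := by simp [T]
  refine ⟨sInf T, ?_, ?_⟩
  · obtain ⟨u, hu_anti, hu_lim, huT⟩ := exists_seq_tendsto_sInf ⟨⊤, hT⟩ (OrderBot.bddBelow T)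
    have hunion : {x | sInf T < φ x} = ⋃ n, {x | u n < φ x} := by
      ext x
      simp only [mem_ofPred_eq, mem_iUnion]
      exact ⟨fun h => (hu_lim.eventually (gt_mem_nhds h)).exists,
        fun ⟨n, hn⟩ => (sInf_le (huT n)).trans_lt hn⟩
    rw [hunion, Monotone.measure_iUnion (s := fun n => {x | u n < φ x})
      fun m n hmn x hx => (hu_anti hmn).trans_lt hx]
    exact iSup_le huT
  · rcases eq_zero_or_pos (sInf T) with h0 | hpos
    · simpa [h0] using hs
    obtain ⟨u, hu_mono, hu_mem, hu_lim⟩ := exists_seq_strictMono_tendsto' hpos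
    have hinter : {x | sInf T ≤ φ x} = ⋂ n, {x | u n < φ x} := by
      ext x
      simp only [mem_ofPred_eq, mem_iInter]
      refine ⟨fun h n => (hu_mem n).2.trans_le h, fun h => not_lt.1 fun hlt => ?_⟩
      obtain ⟨n, hn⟩ := (hu_lim.eventually (lt_mem_nhds hlt)).exists
      exact (h n).not_gt hn
    rw [hinter, Antitone.measure_iInter (s := fun n => {x | u n < φ x})
      (fun m n hmn x hx => (hu_mono.monotone hmn).trans_lt hx)
      (fun n => (measurableSet_lt measurable_const hφ).nullMeasurableSet) ⟨0, measure_ne_top ν _⟩]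
    exact le_iInf fun n => (not_le.1 fun h => (hu_mem n).2.not_ge (sInf_le h)).le

theorem withDensity_apply_of_forall_eq {α : Type*} [MeasurableSpace α] {μ : Measure α}
    {φ : α → ℝ≥0∞} {c : ℝ≥0∞} {W : Set α} (hW : MeasurableSet W) (h : ∀ x ∈ W, φ x = c) :
    μ.withDensity φ W = c * μ W := by
  rw [withDensity_apply _ hW, setLIntegral_congr_fun hW h, setLIntegral_const]

theorem exists_level_withDensity {α : Type*} [MeasurableSpace α] {μ : Measure α}
    {φ : α → ℝ≥0∞} (hφ : Measurable φ) (hfin : ∫⁻ x, φ x ∂μ ≠ ∞) {s : ℝ≥0∞} (hs0 : s ≠ 0)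
    (hs : s < ∫⁻ x, φ x ∂μ) :
    ∃ l, l ≠ 0 ∧ l ≠ ∞ ∧ μ.withDensity φ {x | l < φ x} ≤ s ∧
      s ≤ μ.withDensity φ {x | l ≤ φ x} := by
  set ν := μ.withDensity φ
  have : IsFiniteMeasure ν := isFiniteMeasure_withDensity hfin
  have hνuniv : ν univ = ∫⁻ x, φ x ∂μ := by rw [withDensity_apply _ .univ, Measure.restrict_univ]
  obtain ⟨l, hbig, hge⟩ := exists_measure_lt_le_measure_le ν hφ (hνuniv ▸ hs.le)
  refine ⟨l, ?_, ?_, hbig, hge⟩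
  · rintro rfl
    have hzero : ν {x | φ x = 0} = 0 :=
      (withDensity_apply_eq_zero' hφ.aemeasurable).2 (by simp [← ofPred_and])
    have : ν univ ≤ ν {x | 0 < φ x} + ν {x | φ x = 0} :=
      (measure_mono fun x _ => (eq_zero_or_pos (φ x)).symm).trans (measure_union_le _ _)
    rw [hzero, add_zero, hνuniv] at this
    exact (hbig.trans_lt hs).not_ge this
  · rintro rfl
    have : ν {x | ⊤ ≤ φ x} = 0 := withDensity_absolutelyContinuous μ φ <|
      measure_mono_null (fun x hx => not_lt.2 hx) (ae_iff.1 (ae_lt_top hφ hfin))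
    exact hs0 (le_zero_iff.1 (hge.trans this.le))

theorem exists_superlevelSet_withDensity_eq {α : Type*} [MeasurableSpace α] {μ : Measure α}
    (hμ : μ.HasDarbouxProperty) {φ : α → ℝ≥0∞} (hφ : Measurable φ) (hfin : ∫⁻ x, φ x ∂μ ≠ ∞)
    {s : ℝ≥0∞} (hs0 : s ≠ 0) (hs : s < ∫⁻ x, φ x ∂μ) :
    ∃ l Y, l ≠ 0 ∧ l ≠ ∞ ∧ MeasurableSet Y ∧ μ.withDensity φ Y = s ∧
      (∀ x ∈ Y, l ≤ φ x) ∧ ∀ x ∉ Y, φ x ≤ l := by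
  obtain ⟨l, hl0, hltop, hbig, hge⟩ := exists_level_withDensity hφ hfin hs0 hs
  set ν := μ.withDensity φ
  have : IsFiniteMeasure ν := isFiniteMeasure_withDensity hfin
  have hmidm : MeasurableSet {x | φ x = l} := hφ (measurableSet_singleton l)
  have hmid : ν {x | φ x = l} = l * μ {x | φ x = l} :=
    withDensity_apply_of_forall_eq hmidm fun x hx => hx
  have hmidfin : μ {x | φ x = l} ≠ ∞ := fun h =>
    measure_ne_top ν {x | φ x = l} (by rw [hmid, h, ENNReal.mul_top hl0])
  have hrest : s - ν {x | l < φ x} ≤ l * μ {x | φ x = l} := by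
    rw [← hmid, tsub_le_iff_left]
    refine hge.trans ((measure_mono fun x (hx : l ≤ φ x) => ?_).trans (measure_union_le _ _))
    exact hx.lt_or_eq.imp id Eq.symm
  -- the mass missing from `{x | l < φ x}` is taken from the level set `{x | φ x = l}`
  obtain ⟨W, hWmid, hW, hμW⟩ := hμ hmidm hmidfin ((s - ν {x | l < φ x}) / l)
    (ENNReal.div_le_of_le_mul' hrest)
  have hνW : ν W = s - ν {x | l < φ x} := by
    rw [withDensity_apply_of_forall_eq hW fun x hx => hWmid hx, hμW,
      ENNReal.mul_div_cancel hl0 hltop]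
  refine ⟨l, {x | l < φ x} ∪ W, hl0, hltop, (measurableSet_lt measurable_const hφ).union hW,
    ?_, ?_, fun x hx => not_lt.1 fun h => hx (Or.inl h)⟩
  · rw [measure_union (disjoint_left.2 fun x hx hxW => hx.ne' (hWmid hxW)) hW, hνW,
      add_tsub_cancel_of_le hbig]
  · rintro x (hx | hx)
    exacts [hx.le, (hWmid hx).ge]

theorem measure_le_of_withDensity_le {α : Type*} [MeasurableSpace α] {μ : Measure α}
    {φ : α → ℝ≥0∞} {l : ℝ≥0∞} (hl0 : l ≠ 0) (hltop : l ≠ ∞) {Y S : Set α}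
    (hY : MeasurableSet Y) (hS : MeasurableSet S) (hYφ : ∀ x ∈ Y, l ≤ φ x)
    (hφY : ∀ x ∉ Y, φ x ≤ l) (hfin : μ.withDensity φ Y ≠ ∞)
    (hle : μ.withDensity φ Y ≤ μ.withDensity φ S) : μ Y ≤ μ S := by
  set ν := μ.withDensity φ
  have hYS : ν (Y \ S) ≤ ν (S \ Y) := by
    rw [← measure_inter_add_sdiff Y hS, ← measure_inter_add_sdiff S hY, inter_comm S Y] at hle
    exact (ENNReal.add_le_add_iff_left
      (ne_top_of_le_ne_top hfin (measure_mono inter_subset_left))).1 hle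
  have hlow : l * μ (Y \ S) ≤ ν (Y \ S) := by
    rw [withDensity_apply _ (hY.diff hS), ← setLIntegral_const]
    exact setLIntegral_mono' (hY.diff hS) fun x hx => hYφ x hx.1
  have hup : ν (S \ Y) ≤ l * μ (S \ Y) := by
    rw [withDensity_apply _ (hS.diff hY), ← setLIntegral_const]
    exact setLIntegral_mono' (hS.diff hY) fun x hx => hφY x hx.2
  have hdiff : μ (Y \ S) ≤ μ (S \ Y) :=
    (ENNReal.mul_le_mul_iff_right hl0 hltop).1 (hlow.trans (hYS.trans hup))
  calc μ Y = μ (Y ∩ S) + μ (Y \ S) := (measure_inter_add_sdiff Y hS).symm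
    _ ≤ μ (S ∩ Y) + μ (S \ Y) := by rw [inter_comm]; gcongr
    _ = μ S := measure_inter_add_sdiff S hY

section Prod

variable {α β : Type*} [MeasurableSpace α] [MeasurableSpace β] {μ : Measure α} {ν : Measure β}
  [SFinite μ] [SFinite ν]

theorem MeasureTheory.Measure.prod_inter_fst_preimage {F : Set (α × β)} (hF : MeasurableSet F)
    {T : Set α} (hT : MeasurableSet T) :
    μ.prod ν (F ∩ Prod.fst ⁻¹' T) = μ.withDensity (fun x => ν (Prod.mk x ⁻¹' F)) T := by
  rw [withDensity_apply _ hT, ← Measure.prod_apply hF, Measure.restrict_prod_eq_prod_univ,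
    Measure.restrict_apply hF, prod_univ]

theorem exists_subset_measure_prod_eq_forall_measure_image_fst_le (hμ : μ.HasDarbouxProperty)
    {F : Set (α × β)} (hF : MeasurableSet F) (hFfin : μ.prod ν F ≠ ∞) {s : ℝ≥0∞} (hs0 : s ≠ 0)
    (hsF : s < μ.prod ν F) :
    ∃ G ⊆ F, MeasurableSet G ∧ μ.prod ν G = s ∧
      ∀ A ⊆ F, s ≤ μ.prod ν A → μ (Prod.fst '' G) ≤ μ (Prod.fst '' A) := by
  have htotal : ∫⁻ x, ν (Prod.mk x ⁻¹' F) ∂μ = μ.prod ν F := (Measure.prod_apply hF).symm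
  obtain ⟨l, Y, hl0, hltop, hY, hYs, hYφ, hφY⟩ := exists_superlevelSet_withDensity_eq hμ
    (measurable_measure_prodMk_left hF) (htotal ▸ hFfin) hs0 (htotal ▸ hsF)
  refine ⟨F ∩ Prod.fst ⁻¹' Y, inter_subset_left, hF.inter (measurable_fst hY),
    by rw [Measure.prod_inter_fst_preimage hF hY, hYs], fun A hAF hsA => ?_⟩
  -- `toMeasurable` lets `A` and its projection be arbitrary sets
  set T := toMeasurable μ (Prod.fst '' A)
  have hT : MeasurableSet T := measurableSet_toMeasurable _ _
  have hAT : A ⊆ F ∩ Prod.fst ⁻¹' T := fun z hz =>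
    ⟨hAF hz, subset_toMeasurable _ _ (mem_image_of_mem _ hz)⟩
  calc μ (Prod.fst '' (F ∩ Prod.fst ⁻¹' Y)) ≤ μ Y :=
        measure_mono (image_subset_iff.2 inter_subset_right)
    _ ≤ μ T := measure_le_of_withDensity_le hl0 hltop hY hT hYφ hφY (hYs ▸ ne_top_of_lt hsF)
        (by rw [hYs, ← Measure.prod_inter_fst_preimage hF hT]
            exact hsA.trans (measure_mono hAT))
    _ = μ (Prod.fst '' A) := measure_toMeasurable _

end Prod

theorem IsFsigma.measurableSet {X : Type*} [TopologicalSpace X] [MeasurableSpace X]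
    [OpensMeasurableSpace X] {s : Set X} (h : IsFsigma s) : MeasurableSet s := by
  obtain ⟨g, hg, rfl⟩ := h
  exact .iUnion fun i => (hg i).measurableSet

theorem MeasurableSet.exists_isFsigma_subset_measure_eq {X : Type*} [TopologicalSpace X]
    [MeasurableSpace X] [BorelSpace X] [R1Space X] {μ : Measure X} [μ.InnerRegularCompactLTTop]
    {B : Set X} (hB : MeasurableSet B) (hfin : μ B ≠ ∞) : ∃ G ⊆ B, IsFsigma G ∧ μ G = μ B := by
  choose K hKB _ hK hKlt using fun k : ℕ =>
    hB.exists_isCompact_isClosed_sdiff_lt hfin (ENNReal.inv_ne_zero.2 (ENNReal.natCast_ne_top k))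
  refine ⟨⋃ k, K k, iUnion_subset hKB, ⟨K, hK, rfl⟩,
    measure_eq_measure_of_null_sdiff (iUnion_subset hKB) (le_antisymm ?_ zero_le)⟩
  exact ge_of_tendsto' ENNReal.tendsto_inv_nat_nhds_zero fun k =>
    (measure_mono (sdiff_subset_sdiff_right (subset_iUnion K k))).trans (hKlt k).le

theorem exists_isFsigma_subset_volume_eq_forall_volume_projHyp_le {n : ℕ} (j : Fin n)
    {F : Set (Fin n → ℝ)} (hF : MeasurableSet F) (hFfin : volume F ≠ ∞) {s : ℝ≥0∞} (hs0 : s ≠ 0)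
    (hsF : s < volume F) :
    ∃ G ⊆ F, IsFsigma G ∧ volume G = s ∧
      ∀ A ⊆ F, s ≤ volume A → volume (projHyp j '' G) ≤ volume (projHyp j '' A) := by
  suffices h : ∃ G ⊆ F, MeasurableSet G ∧ volume G = s ∧
      ∀ A ⊆ F, s ≤ volume A → volume (projHyp j '' G) ≤ volume (projHyp j '' A) by
    obtain ⟨G, hGF, hG, hGs, hmin⟩ := h
    obtain ⟨G', hG'G, hG', hG's⟩ := hG.exists_isFsigma_subset_measure_eq (hGs ▸ hsF.ne_top)
    exact ⟨G', hG'G.trans hGF, hG', hG's.trans hGs,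
      fun A hAF hsA => (measure_mono (image_mono hG'G)).trans (hmin A hAF hsA)⟩
  rcases isEmpty_or_nonempty {i : Fin n // i ≠ j} with hpt | hne
  · -- the hyperplane is a point, and a nonempty set projects onto all of it
    have : Nonempty (Fin n) := ⟨j⟩
    obtain ⟨G, hGF, hG, hGs⟩ := Measure.hasDarbouxProperty_volume_pi hF hFfin s hsF.le
    refine ⟨G, hGF, hG, hGs, fun A _ hsA => measure_mono fun y _ => ?_⟩
    obtain ⟨x, hx⟩ := nonempty_of_measure_ne_zero (ne_bot_of_le_ne_bot hs0 hsA)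
    exact ⟨x, hx, Subsingleton.elim _ _⟩
  · set e := MeasurableEquiv.piEquivPiSubtypeProd (fun _ : Fin n => ℝ) (· ≠ j)
    have he : MeasurePreserving e volume (volume.prod volume) :=
      volume_preserving_piEquivPiSubtypeProd _ _
    have hproj : ∀ B, projHyp j '' B = Prod.fst '' (e '' B) := fun B => by
      rw [image_image]; rfl
    have hvol : ∀ B, volume.prod volume (e '' B) = volume B := fun B => by
      rw [e.image_eq_preimage_symm, (he.symm e).measure_preimage_equiv]
    obtain ⟨G, hGF, hG, hGs, hmin⟩ := exists_subset_measure_prod_eq_forall_measure_image_fst_le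
      Measure.hasDarbouxProperty_volume_pi (e.measurableSet_image.2 hF) (by rwa [hvol]) hs0
      (by rwa [hvol])
    refine ⟨e ⁻¹' G, ?_, e.measurable hG, by rw [he.measure_preimage_equiv, hGs],
      fun A hAF hsA => ?_⟩
    · rw [← e.preimage_image F]; exact preimage_mono hGF
    · rw [hproj, hproj, e.image_preimage]
      exact hmin _ (image_mono hAF) (by rwa [hvol])

theorem exists_fin_chain {α : Type*} {n : ℕ} (P : ℕ → α → Prop) (R : Fin n → α → α → Prop)
    (a : α) (ha : P 0 a) (hstep : ∀ (j : Fin n) x, P j x → ∃ y, P (j + 1) y ∧ R j x y) :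
    ∃ f : Fin (n + 1) → α, f 0 = a ∧ (∀ j : Fin (n + 1), P j (f j)) ∧
      ∀ j : Fin n, R j (f j.castSucc) (f j.succ) := by
  induction n with
  | zero =>
    exact ⟨fun _ => a, rfl, fun j => by simpa [Fin.fin_one_eq_zero j] using ha, fun j => j.elim0⟩
  | succ n ih =>
    obtain ⟨f, hf0, hfP, hfR⟩ := ih (fun j => R j.castSucc) fun j => hstep j.castSucc
    obtain ⟨y, hyP, hyR⟩ := hstep (Fin.last n) (f (Fin.last n)) (hfP _)
    refine ⟨Fin.snoc f y, ?_, Fin.lastCases ?_ fun j => ?_, Fin.lastCases ?_ fun j => ?_⟩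
    · simpa using hf0
    · simpa using hyP
    · simpa using hfP j
    · simpa using hyR
    · rw [Fin.succ_castSucc, Fin.snoc_castSucc, Fin.snoc_castSucc]
      exact hfR j

theorem stmt7_general (n : ℕ) (E : Set (Fin n → ℝ)) (hE : IsFsigma E)
    (t : ℝ) (ht : 0 < t) (hEt : volume E = ENNReal.ofReal t) :
    ∃ Es : Fin (n + 1) → Set (Fin n → ℝ),
      Es 0 = E ∧
      (∀ j : Fin (n + 1), IsFsigma (Es j)) ∧
      (∀ j : Fin n, Es j.succ ⊆ Es j.castSucc) ∧
      (∀ j : Fin (n + 1), volume (Es j) = ENNReal.ofReal (t / 2 ^ (j : ℕ))) ∧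
      (∀ j : Fin n, ∀ A : Set (Fin n → ℝ), IsFsigma A → A ⊆ Es j.castSucc →
        ENNReal.ofReal (t / 2 ^ ((j : ℕ) + 1)) ≤ volume A →
        volume (projHyp j '' Es j.succ) ≤ volume (projHyp j '' A)) := by
  have hhalf : ∀ k : ℕ, 0 < t / 2 ^ (k + 1) ∧ t / 2 ^ (k + 1) < t / 2 ^ k := fun k =>
    ⟨by positivity,
      div_lt_div_of_pos_left ht (by positivity) (pow_lt_pow_right₀ one_lt_two k.lt_succ_self)⟩
  obtain ⟨Es, hE0, hvol, hstep⟩ := exists_fin_chain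
    (fun k F => IsFsigma F ∧ volume F = ENNReal.ofReal (t / 2 ^ k))
    (fun j F G => G ⊆ F ∧ ∀ A : Set (Fin n → ℝ), IsFsigma A → A ⊆ F →
      ENNReal.ofReal (t / 2 ^ ((j : ℕ) + 1)) ≤ volume A →
      volume (projHyp j '' G) ≤ volume (projHyp j '' A))
    E ⟨hE, by rw [hEt, pow_zero, div_one]⟩ fun j F ⟨hF, hFt⟩ => by
      obtain ⟨G, hGF, hG, hGs, hmin⟩ :=
        exists_isFsigma_subset_volume_eq_forall_volume_projHyp_le j hF.measurableSet
          (hFt ▸ ENNReal.ofReal_ne_top) (ENNReal.ofReal_pos.2 (hhalf j).1).ne'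
          (hFt ▸ (ENNReal.ofReal_lt_ofReal_iff ((hhalf j).1.trans (hhalf j).2)).2 (hhalf j).2)
      exact ⟨G, ⟨hG, hGs⟩, hGF, fun A _ hAF hsA => hmin A hAF hsA⟩
  exact ⟨Es, hE0, fun j => (hvol j).1, fun j => (hstep j).1, fun j => (hvol j).2,
    fun j => (hstep j).2⟩

/-- Projection lemma: for an F_σ set E ⊆ ℝ^n with |E| = t ∈ (0,∞) there are nested F_σ
sets E = E₀ ⊇ E₁ ⊇ ⋯ ⊇ Eₙ with |E_j| = 2^{-j} t such that for every j = 1,…,n and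
every F_σ set A ⊆ E_{j-1} with |A| ≥ 2^{-j} t one has
mes_{n-1} Π_j(E_j) ≤ mes_{n-1} Π_j(A). -/
theorem stmt7 (n : ℕ) (hn : 1 ≤ n) (E : Set (Fin n → ℝ)) (hE : IsFsigma E)
    (t : ℝ) (ht : 0 < t) (hEt : volume E = ENNReal.ofReal t) :
    ∃ Es : Fin (n + 1) → Set (Fin n → ℝ),
      Es 0 = E ∧
      (∀ j : Fin (n + 1), IsFsigma (Es j)) ∧
      (∀ j : Fin n, Es j.succ ⊆ Es j.castSucc) ∧
      (∀ j : Fin (n + 1), volume (Es j) = ENNReal.ofReal (t / 2 ^ (j : ℕ))) ∧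
      (∀ j : Fin n, ∀ A : Set (Fin n → ℝ), IsFsigma A → A ⊆ Es j.castSucc →
        ENNReal.ofReal (t / 2 ^ ((j : ℕ) + 1)) ≤ volume A →
        volume (projHyp j '' Es j.succ) ≤ volume (projHyp j '' A)) :=
  stmt7_general n E hE t ht hEt
end

section
/- Let ω : [0,∞) → [0,∞) be a modulus of continuity with ω bounded, let 1 ≤ θ < ∞, and let σ = sup_{δ>0} ω(δ)/δ. Then lim_{α→1−} (1−α) ∫_0^∞ (t^{−α} ω(t))^θ dt/t = σ^θ/θ (in [0,∞], with both sides simultaneously infinite if σ = ∞). -/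
/-!
Write the integrand as `(ω(t)/t)^θ · t^((1-α)θ-1)`. Since `(1-α) ∫₀^δ t^((1-α)θ-1) dt = δ^((1-α)θ)/θ`
tends to `1/θ` for every `δ > 0`, the measure `(1-α) t^((1-α)θ-1) dt` concentrates at `t = 0` as
`α → 1⁻`, while the part over `t > 1` stays bounded because `ω` is. Near `0`, `ω(t)/t → σ`: the
bound `ω(t)/t ≤ σ` is the definition of `σ`, and subadditivity gives `ω(h)/h ≥ ω(t)/(t+h)`.
-/

open MeasureTheory Filter Set
open scoped ENNReal Topology

section Subadditive

variable {ω : ℝ → ℝ}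

theorem le_nat_mul_of_subadditive (hsub : ∀ a b : ℝ, 0 ≤ a → 0 ≤ b → ω (a + b) ≤ ω a + ω b)
    {h : ℝ} (hh : 0 ≤ h) {n : ℕ} (hn : 1 ≤ n) : ω (n * h) ≤ n * ω h := by
  induction n, hn using Nat.le_induction with
  | base => simp
  | succ n hn ih =>
    push_cast
    calc ω ((n + 1) * h) = ω (n * h + h) := by ring_nf
      _ ≤ ω (n * h) + ω h := hsub _ _ (by positivity) hh
      _ ≤ (n + 1) * ω h := by linarith

/-- Cover `[0, t]` by `⌈t/h⌉` intervals of length `h`. -/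
theorem div_add_le_div_of_subadditive (hnn : ∀ x : ℝ, 0 ≤ x → 0 ≤ ω x)
    (hmono : ∀ a b : ℝ, 0 ≤ a → a ≤ b → ω a ≤ ω b)
    (hsub : ∀ a b : ℝ, 0 ≤ a → 0 ≤ b → ω (a + b) ≤ ω a + ω b)
    {h t : ℝ} (hh : 0 < h) (ht : 0 < t) : ω t / (t + h) ≤ ω h / h := by
  set n := ⌈t / h⌉₊
  have hn : 1 ≤ n := Nat.one_le_iff_ne_zero.2 (Nat.ceil_pos.2 (div_pos ht hh)).ne'
  have hle : t ≤ n * h := (div_le_iff₀ hh).1 (Nat.le_ceil _)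
  have hlt : n * h < t + h := by
    have := Nat.ceil_lt_add_one (div_pos ht hh).le
    rw [← sub_lt_iff_lt_add, lt_div_iff₀ hh, sub_mul, one_mul] at this
    linarith
  calc ω t / (t + h) ≤ n * ω h / (n * h) :=
        div_le_div₀ (by have := hnn h hh.le; positivity)
          ((hmono _ _ ht.le hle).trans (le_nat_mul_of_subadditive hsub hh.le hn))
          (by positivity) hlt.le
    _ = ω h / h := mul_div_mul_left _ _ (by positivity)

end Subadditive

noncomputable def maxSlope (ω : ℝ → ℝ) : ℝ≥0∞ :=
  ⨆ δ : {δ : ℝ // 0 < δ}, ENNReal.ofReal (ω δ.1 / δ.1)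

noncomputable def besovEnergy (ω : ℝ → ℝ) (θ α : ℝ) : ℝ≥0∞ :=
  ENNReal.ofReal (1 - α) * ∫⁻ t in Ioi (0:ℝ), ENNReal.ofReal ((t ^ (-α) * ω t) ^ θ / t)

section Slope

variable {ω : ℝ → ℝ}

theorem ofReal_div_le_maxSlope {t : ℝ} (ht : 0 < t) : ENNReal.ofReal (ω t / t) ≤ maxSlope ω :=
  le_iSup (fun δ : {δ : ℝ // 0 < δ} => ENNReal.ofReal (ω δ.1 / δ.1)) ⟨t, ht⟩

theorem tendsto_ofReal_div_maxSlope (hnn : ∀ x : ℝ, 0 ≤ x → 0 ≤ ω x)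
    (hmono : ∀ a b : ℝ, 0 ≤ a → a ≤ b → ω a ≤ ω b)
    (hsub : ∀ a b : ℝ, 0 ≤ a → 0 ≤ b → ω (a + b) ≤ ω a + ω b) :
    Tendsto (fun h => ENNReal.ofReal (ω h / h)) (𝓝[>] 0) (𝓝 (maxSlope ω)) := by
  refine tendsto_order.2 ⟨fun c hc => ?_, fun c hc => ?_⟩
  · obtain ⟨⟨t, ht⟩, hct⟩ := lt_iSup_iff.1 hc
    have hlim : Tendsto (fun h => ENNReal.ofReal (ω t / (t + h))) (𝓝[>] 0)
        (𝓝 (ENNReal.ofReal (ω t / t))) := by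
      have : Tendsto (fun h => ω t / (t + h)) (𝓝 0) (𝓝 (ω t / (t + 0))) :=
        tendsto_const_nhds.div (tendsto_const_nhds.add tendsto_id) (by simpa using ht.ne')
      simpa using (ENNReal.tendsto_ofReal this).mono_left nhdsWithin_le_nhds
    filter_upwards [hlim.eventually (eventually_gt_nhds hct), self_mem_nhdsWithin] with h hch hh
    exact hch.trans_le
      (ENNReal.ofReal_le_ofReal (div_add_le_div_of_subadditive hnn hmono hsub hh ht))
  · filter_upwards [self_mem_nhdsWithin] with h hh
    exact (ofReal_div_le_maxSlope hh).trans_lt hc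

end Slope

theorem lintegral_Ioc_rpow_sub_one {p δ : ℝ} (hp : 0 < p) (hδ : 0 ≤ δ) :
    ∫⁻ t in Ioc 0 δ, ENNReal.ofReal (t ^ (p - 1)) = ENNReal.ofReal (δ ^ p / p) := by
  have hint : IntegrableOn (fun t : ℝ => t ^ (p - 1)) (Ioc 0 δ) := by
    rw [← intervalIntegrable_iff_integrableOn_Ioc_of_le hδ]
    exact intervalIntegral.intervalIntegrable_rpow' (by linarith)
  rw [← ofReal_integral_eq_lintegral_ofReal hint, ← intervalIntegral.integral_of_le hδ,
    integral_rpow (Or.inl (by linarith)), sub_add_cancel, Real.zero_rpow hp.ne', sub_zero]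
  filter_upwards [ae_restrict_mem measurableSet_Ioc] with t ht
  exact Real.rpow_nonneg ht.1.le _

theorem ofReal_one_sub_mul_lintegral_Ioc {α θ δ : ℝ} (hα : α < 1) (hθ : 0 < θ) (hδ : 0 ≤ δ) :
    ENNReal.ofReal (1 - α) * ∫⁻ t in Ioc 0 δ, ENNReal.ofReal (t ^ ((1 - α) * θ - 1))
      = ENNReal.ofReal (δ ^ ((1 - α) * θ)) / ENNReal.ofReal θ := by
  have h1α : 0 < 1 - α := by linarith
  rw [lintegral_Ioc_rpow_sub_one (by positivity) hδ, ← ENNReal.ofReal_mul h1α.le,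
    ← ENNReal.ofReal_div_of_pos hθ]
  congr 1
  field_simp

theorem lintegral_Ioi_one_rpow_lt_top {s : ℝ} (hs : s < -1) :
    ∫⁻ t in Ioi (1:ℝ), ENNReal.ofReal (t ^ s) < ⊤ :=
  (integrableOn_Ioi_rpow_of_lt hs one_pos).lintegral_lt_top

theorem ofReal_rpow_neg_mul_rpow_div {α θ x t : ℝ} (hθ : 0 ≤ θ) (hx : 0 ≤ x) (ht : 0 < t) :
    ENNReal.ofReal ((t ^ (-α) * x) ^ θ / t)
      = ENNReal.ofReal (x / t) ^ θ * ENNReal.ofReal (t ^ ((1 - α) * θ - 1)) := by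
  have hxt : t ^ (-α) * x = x / t * t ^ (1 - α) := by
    rw [Real.rpow_sub ht, Real.rpow_one, Real.rpow_neg ht.le]
    field_simp
  rw [hxt, Real.mul_rpow (by positivity) (by positivity), ← Real.rpow_mul ht.le, mul_div_assoc,
    ← Real.rpow_sub_one ht.ne', ENNReal.ofReal_mul (by positivity),
    ENNReal.ofReal_rpow_of_nonneg (by positivity) hθ]

theorem rpow_neg_mul_rpow_div_le {α θ x M t : ℝ} (hα : 1 / 2 ≤ α) (hθ : 0 ≤ θ) (hx : 0 ≤ x)
    (hxM : x ≤ M) (ht : 1 ≤ t) : (t ^ (-α) * x) ^ θ / t ≤ M ^ θ * t ^ (-(θ / 2) - 1) := by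
  have ht0 : 0 < t := one_pos.trans_le ht
  calc (t ^ (-α) * x) ^ θ / t ≤ (t ^ (-α) * M) ^ θ / t := by gcongr
    _ = M ^ θ * t ^ (-α * θ - 1) := by
      rw [Real.mul_rpow (by positivity) (hx.trans hxM), ← Real.rpow_mul ht0.le,
        Real.rpow_sub_one ht0.ne']
      ring
    _ ≤ M ^ θ * t ^ (-(θ / 2) - 1) := by
      have hM : 0 ≤ M := hx.trans hxM
      gcongr
      nlinarith

section Energy

variable {ω : ℝ → ℝ} {θ α : ℝ}

theorem besovEnergy_le (hnn : ∀ x : ℝ, 0 ≤ x → 0 ≤ ω x) {M : ℝ}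
    (hM : ∀ x : ℝ, 0 ≤ x → ω x ≤ M) (hθ : 0 < θ) (hα₁ : 1 / 2 ≤ α) (hα : α < 1) :
    besovEnergy ω θ α ≤ maxSlope ω ^ θ / ENNReal.ofReal θ + ENNReal.ofReal (1 - α) *
      (ENNReal.ofReal (M ^ θ) * ∫⁻ t in Ioi 1, ENNReal.ofReal (t ^ (-(θ / 2) - 1))) := by
  rw [besovEnergy, ← Ioc_union_Ioi_eq_Ioi zero_le_one,
    lintegral_union measurableSet_Ioi (Ioc_disjoint_Ioi le_rfl), mul_add]
  gcongr ?_ + ?_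
  · calc ENNReal.ofReal (1 - α) * ∫⁻ t in Ioc 0 1, ENNReal.ofReal ((t ^ (-α) * ω t) ^ θ / t)
        ≤ ENNReal.ofReal (1 - α) *
            ∫⁻ t in Ioc 0 1, maxSlope ω ^ θ * ENNReal.ofReal (t ^ ((1 - α) * θ - 1)) := by
          refine mul_le_mul_right ?_ _
          refine setLIntegral_mono' measurableSet_Ioc fun t ht => ?_
          rw [ofReal_rpow_neg_mul_rpow_div hθ.le (hnn t ht.1.le) ht.1]
          gcongr
          exact ofReal_div_le_maxSlope ht.1
      _ = maxSlope ω ^ θ / ENNReal.ofReal θ := by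
          rw [lintegral_const_mul _ (by fun_prop), mul_left_comm,
            ofReal_one_sub_mul_lintegral_Ioc hα hθ zero_le_one, Real.one_rpow,
            ENNReal.ofReal_one, mul_one_div]
  · refine mul_le_mul_right ?_ _
    rw [← lintegral_const_mul' _ _ ENNReal.ofReal_ne_top]
    refine setLIntegral_mono' measurableSet_Ioi fun t ht => ?_
    have ht0 : 0 ≤ t := zero_le_one.trans (le_of_lt ht)
    rw [← ENNReal.ofReal_mul (Real.rpow_nonneg ((hnn 0 le_rfl).trans (hM 0 le_rfl)) θ)]
    exact ENNReal.ofReal_le_ofReal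
      (rpow_neg_mul_rpow_div_le hα₁ hθ.le (hnn t ht0) (hM t ht0) (le_of_lt ht))

theorem le_besovEnergy (hnn : ∀ x : ℝ, 0 ≤ x → 0 ≤ ω x) (hθ : 0 < θ) (hα : α < 1)
    {b : ℝ≥0∞} {δ : ℝ} (hδ : 0 ≤ δ) (hb : ∀ t ∈ Ioc 0 δ, b ≤ ENNReal.ofReal (ω t / t)) :
    b ^ θ * (ENNReal.ofReal (δ ^ ((1 - α) * θ)) / ENNReal.ofReal θ) ≤ besovEnergy ω θ α :=
  calc b ^ θ * (ENNReal.ofReal (δ ^ ((1 - α) * θ)) / ENNReal.ofReal θ)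
      = ENNReal.ofReal (1 - α) *
          ∫⁻ t in Ioc 0 δ, b ^ θ * ENNReal.ofReal (t ^ ((1 - α) * θ - 1)) := by
        rw [lintegral_const_mul _ (by fun_prop), mul_left_comm,
          ofReal_one_sub_mul_lintegral_Ioc hα hθ hδ]
    _ ≤ ENNReal.ofReal (1 - α) *
          ∫⁻ t in Ioc 0 δ, ENNReal.ofReal ((t ^ (-α) * ω t) ^ θ / t) := by
        refine mul_le_mul_right ?_ _
        refine setLIntegral_mono' measurableSet_Ioc fun t ht => ?_
        rw [ofReal_rpow_neg_mul_rpow_div hθ.le (hnn t ht.1.le) ht.1]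
        gcongr
        exact hb t ht
    _ ≤ besovEnergy ω θ α := mul_le_mul_right (lintegral_mono_set Ioc_subset_Ioi_self) _

end Energy

theorem ENNReal.rpow_div_le_of_forall_lt {σ c L : ℝ≥0∞} {θ : ℝ} (hθ : 0 < θ)
    (h : ∀ b < σ, b ^ θ / c ≤ L) : σ ^ θ / c ≤ L := by
  rcases eq_or_ne σ 0 with rfl | hσ
  · rw [ENNReal.zero_rpow_of_pos hθ, ENNReal.zero_div]
    exact bot_le
  · have : NeBot (𝓝[<] σ) := nhdsLT_neBot_of_exists_lt ⟨0, pos_iff_ne_zero.2 hσ⟩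
    have hlim : Tendsto (fun b : ℝ≥0∞ => b ^ θ / c) (𝓝[<] σ) (𝓝 (σ ^ θ / c)) :=
      ENNReal.Tendsto.div_const
        ((ENNReal.continuous_rpow_const.tendsto σ).mono_left nhdsWithin_le_nhds)
        (Or.inl (by simp [hσ, hθ, hθ.le]))
    exact le_of_tendsto hlim (eventually_mem_nhdsWithin.mono h)

section Limit

variable {ω : ℝ → ℝ} {θ : ℝ}

theorem le_liminf_besovEnergy (hnn : ∀ x : ℝ, 0 ≤ x → 0 ≤ ω x)
    (hmono : ∀ a b : ℝ, 0 ≤ a → a ≤ b → ω a ≤ ω b)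
    (hsub : ∀ a b : ℝ, 0 ≤ a → 0 ≤ b → ω (a + b) ≤ ω a + ω b) (hθ : 0 < θ) :
    maxSlope ω ^ θ / ENNReal.ofReal θ ≤ liminf (besovEnergy ω θ) (𝓝[<] 1) := by
  refine ENNReal.rpow_div_le_of_forall_lt hθ fun b hb => ?_
  obtain ⟨δ, hδ, hbδ⟩ := mem_nhdsGT_iff_exists_Ioc_subset.1
    ((tendsto_ofReal_div_maxSlope hnn hmono hsub).eventually (eventually_gt_nhds hb))
  have hexp : Tendsto (fun α : ℝ => (1 - α) * θ) (𝓝[<] 1) (𝓝 0) := by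
    have : Tendsto (fun α : ℝ => (1 - α) * θ) (𝓝 1) (𝓝 ((1 - 1) * θ)) :=
      (tendsto_const_nhds.sub tendsto_id).mul_const θ
    simpa using this.mono_left nhdsWithin_le_nhds
  have hlim : Tendsto (fun α : ℝ => b ^ θ * (ENNReal.ofReal (δ ^ ((1 - α) * θ)) /
      ENNReal.ofReal θ)) (𝓝[<] 1) (𝓝 (b ^ θ / ENNReal.ofReal θ)) := by
    have hpow := ENNReal.tendsto_ofReal ((Real.continuousAt_const_rpow hδ.ne').tendsto.comp hexp)
    simp only [Real.rpow_zero, ENNReal.ofReal_one] at hpow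
    simpa [div_eq_mul_inv] using
      ENNReal.Tendsto.const_mul (ENNReal.Tendsto.div_const hpow (Or.inl one_ne_zero))
        (Or.inl (by simp))
  rw [← hlim.liminf_eq]
  exact liminf_le_liminf (eventually_mem_nhdsWithin.mono fun α hα =>
    le_besovEnergy hnn hθ hα (le_of_lt hδ) fun t ht => (hbδ ht).le)

theorem limsup_besovEnergy_le (hnn : ∀ x : ℝ, 0 ≤ x → 0 ≤ ω x)
    (hbdd : ∃ M : ℝ, ∀ x : ℝ, 0 ≤ x → ω x ≤ M) (hθ : 0 < θ) :
    limsup (besovEnergy ω θ) (𝓝[<] 1) ≤ maxSlope ω ^ θ / ENNReal.ofReal θ := by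
  obtain ⟨M, hM⟩ := hbdd
  set C := ENNReal.ofReal (M ^ θ) * ∫⁻ t in Ioi 1, ENNReal.ofReal (t ^ (-(θ / 2) - 1))
  have hC : C ≠ ⊤ := ENNReal.mul_ne_top ENNReal.ofReal_ne_top
    (lintegral_Ioi_one_rpow_lt_top (by linarith)).ne
  have hlim : Tendsto (fun α : ℝ => maxSlope ω ^ θ / ENNReal.ofReal θ + ENNReal.ofReal (1 - α) * C)
      (𝓝[<] 1) (𝓝 (maxSlope ω ^ θ / ENNReal.ofReal θ)) := by
    have : Tendsto (fun α : ℝ => ENNReal.ofReal (1 - α)) (𝓝 1) (𝓝 (ENNReal.ofReal (1 - 1))) :=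
      ENNReal.tendsto_ofReal (tendsto_const_nhds.sub tendsto_id)
    simpa using tendsto_const_nhds.add
      (ENNReal.Tendsto.mul_const (this.mono_left nhdsWithin_le_nhds) (Or.inr hC))
  rw [← hlim.limsup_eq]
  refine limsup_le_limsup ?_
  filter_upwards [Ioo_mem_nhdsLT (by norm_num : (1 / 2 : ℝ) < 1)] with α hα
  exact besovEnergy_le hnn hM hθ hα.1.le hα.2

end Limit

theorem stmt16_general (ω : ℝ → ℝ) (θ : ℝ) (hθ : 1 ≤ θ)
    (hnn : ∀ x : ℝ, 0 ≤ x → 0 ≤ ω x)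
    (hmono : ∀ a b : ℝ, 0 ≤ a → a ≤ b → ω a ≤ ω b)
    (hbdd : ∃ M : ℝ, ∀ x : ℝ, 0 ≤ x → ω x ≤ M)
    (hsub : ∀ a b : ℝ, 0 ≤ a → 0 ≤ b → ω (a + b) ≤ ω a + ω b) :
    Tendsto
      (fun α : ℝ => ENNReal.ofReal (1 - α) *
        ∫⁻ t in Set.Ioi (0:ℝ), ENNReal.ofReal ((t ^ (-α) * ω t) ^ θ / t))
      (nhdsWithin 1 (Set.Iio 1))
      (nhds ((⨆ δ : {δ : ℝ // 0 < δ}, ENNReal.ofReal (ω δ.1 / δ.1)) ^ θ /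
        ENNReal.ofReal θ)) := by
  have hθ₀ : 0 < θ := one_pos.trans_le hθ
  exact tendsto_of_le_liminf_of_limsup_le (le_liminf_besovEnergy hnn hmono hsub hθ₀)
    (limsup_besovEnergy_le hnn hbdd hθ₀)

/-- BBM-type limit: for a modulus of continuity ω and 1 ≤ θ < ∞, with
σ = sup_{δ>0} ω(δ)/δ (in [0,∞]),
lim_{α→1⁻} (1-α) ∫_0^∞ (t^{-α} ω(t))^θ dt/t = σ^θ/θ in [0,∞]. -/
theorem stmt16 (ω : ℝ → ℝ) (θ : ℝ) (hθ : 1 ≤ θ)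
    (hnn : ∀ x : ℝ, 0 ≤ x → 0 ≤ ω x)
    (hmono : ∀ a b : ℝ, 0 ≤ a → a ≤ b → ω a ≤ ω b)
    (hcont : ContinuousOn ω (Set.Ici 0))
    (hbdd : ∃ M : ℝ, ∀ x : ℝ, 0 ≤ x → ω x ≤ M)
    (hsub : ∀ a b : ℝ, 0 ≤ a → 0 ≤ b → ω (a + b) ≤ ω a + ω b)
    (h0 : ω 0 = 0) :
    Tendsto
      (fun α : ℝ => ENNReal.ofReal (1 - α) *
        ∫⁻ t in Set.Ioi (0:ℝ), ENNReal.ofReal ((t ^ (-α) * ω t) ^ θ / t))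
      (nhdsWithin 1 (Set.Iio 1))
      (nhds ((⨆ δ : {δ : ℝ // 0 < δ}, ENNReal.ofReal (ω δ.1 / δ.1)) ^ θ /
        ENNReal.ofReal θ)) :=
  stmt16_general ω θ hθ hnn hmono hbdd hsub
end

section
/- Let f, g : ℝ → ℂ be measurable functions vanishing at infinity (with finite distribution functions), and let f*, g* denote their nonincreasing rearrangements on (0,∞). Then for 1 ≤ p < ∞, ∫_0^∞ |f*(t) − g*(t)|^p dt ≤ ∫_ℝ |f(x) − g(x)|^p dx (nonexpansivity of the rearrangement in L^p). -/
/-!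
Write `d_h(y) = |{|h| > y}|`. For `u, v > 0` the set `{t > 0 : u < f*(t), g*(t) ≤ v}` lies in
the interval `[d_g(v), d_f(u)]`, while `d_f(u) - d_g(v) ≤ |{u < |f|, |g| ≤ v}|`; so the rearranged
pair has smaller mixed level sets than `(|f|, |g|)`. Integrating these level-set inequalities
against a measure `κ_p` on pairs `(u, v)` with `κ_p {u < a, b ≤ v} = (a - b)₊ ^ p` gives
`∫ |f* - g*| ^ p ≤ ∫ | |f| - |g| | ^ p ≤ ∫ |f - g| ^ p`. One can take for `κ_p` the image under
`(v, s) ↦ (v + s, v)` of Lebesgue measure on `(0, ∞)` times a measure `ρ_p` with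
`ρ_p [0, c) = p c ^ (p - 1)`: a Dirac mass at `0` when `p = 1`, the density `p (p - 1) s ^ (p - 2)`
when `p > 1`.
-/

open MeasureTheory Set Filter Topology
open scoped ENNReal

/-- The left-continuous nonincreasing rearrangement of a complex-valued function on ℝ:
f*(t) = sup_{|E|=t} inf_{x∈E} |f(x)|. -/
noncomputable def rearrC (f : ℝ → ℂ) (t : ℝ) : ℝ :=
  sSup {y : ℝ | ∃ E : Set ℝ, volume E = ENNReal.ofReal t ∧ y = ⨅ x : E, ‖f x.1‖}

lemma exists_subset_volume_eq {s : Set ℝ} (hs : volume s ≠ ∞) {r : ℝ≥0∞} (hr : r ≤ volume s) :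
    ∃ E ⊆ s, volume E = r := by
  obtain rfl | hr := hr.eq_or_lt
  · exact ⟨s, subset_rfl, rfl⟩
  have hfin : ∀ c, volume (s ∩ Icc (-c) c) ≠ ∞ :=
    fun c => measure_ne_top_of_subset inter_subset_left hs
  set g : ℝ → ℝ := fun c => (volume (s ∩ Icc (-c) c)).toReal with hg_def
  have hg : Continuous g := by
    refine (LipschitzWith.of_le_add_mul 2 fun x y => ?_).continuous
    have hsub : s ∩ Icc (-x) x ⊆ s ∩ Icc (-y) y ∪ (Icc (-x) (-y) ∪ Icc y x) := by
      rintro z ⟨hz, h1, h2⟩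
      rcases lt_or_ge z (-y) with h3 | h3
      · exact Or.inr (Or.inl ⟨h1, h3.le⟩)
      rcases le_or_gt z y with h4 | h4
      · exact Or.inl ⟨hz, h3, h4⟩
      · exact Or.inr (Or.inr ⟨h4.le, h2⟩)
    have hd : ENNReal.ofReal (x - y) ≤ ENNReal.ofReal (dist x y) :=
      ENNReal.ofReal_le_ofReal ((le_abs_self _).trans_eq (Real.dist_eq x y).symm)
    have h : volume (s ∩ Icc (-x) x) ≤
        volume (s ∩ Icc (-y) y) + ENNReal.ofReal ((2 : ℝ) * dist x y) :=
      calc volume (s ∩ Icc (-x) x)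
          ≤ volume (s ∩ Icc (-y) y) + (volume (Icc (-x) (-y)) + volume (Icc y x)) :=
            (measure_mono hsub).trans
              ((measure_union_le _ _).trans (add_le_add_right (measure_union_le _ _) _))
        _ ≤ _ := by
            rw [Real.volume_Icc, Real.volume_Icc, neg_sub_neg, two_mul,
              ENNReal.ofReal_add dist_nonneg dist_nonneg]
            gcongr
    calc g x ≤ (volume (s ∩ Icc (-y) y) + ENNReal.ofReal ((2 : ℝ) * dist x y)).toReal :=
          ENNReal.toReal_mono (by finiteness) h
      _ = g y + 2 * dist x y := by
          rw [ENNReal.toReal_add (hfin y) ENNReal.ofReal_ne_top,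
            ENNReal.toReal_ofReal (by positivity)]
  have hlim : Tendsto g atTop (𝓝 (volume s).toReal) := by
    have hU : ⋃ c : ℝ, s ∩ Icc (-c) c = s := by
      rw [← inter_iUnion, inter_eq_left]
      exact fun z _ => mem_iUnion.2 ⟨|z|, neg_abs_le z, le_abs_self z⟩
    have := tendsto_measure_iUnion_atTop (μ := volume) (s := fun c : ℝ => s ∩ Icc (-c) c)
      fun a b hab => inter_subset_inter_right _ (Icc_subset_Icc (neg_le_neg hab) hab)
    rw [hU] at this
    exact (ENNReal.tendsto_toReal hs).comp this
  obtain ⟨c, hc, hc0⟩ := ((hlim.eventually (lt_mem_nhds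
    (ENNReal.toReal_strict_mono hs hr))).and (eventually_ge_atTop 0)).exists
  have hg0 : g 0 = 0 := by
    simp [hg_def, measure_mono_null inter_subset_right (Real.volume_singleton)]
  obtain ⟨c', -, hc'⟩ := intermediate_value_Icc hc0 hg.continuousOn
    ⟨hg0.trans_le ENNReal.toReal_nonneg, hc.le⟩
  exact ⟨s ∩ Icc (-c') c', inter_subset_left,
    (ENNReal.toReal_eq_toReal_iff' (hfin c') hr.ne_top).1 hc'⟩

section Superlevel

variable {α : Type*} [MeasurableSpace α] {μ : Measure α} {φ : α → ℝ}

lemma tendsto_measure_lt_atTop_zero (hφ : AEMeasurable φ μ)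
    (hfin : ∃ y, μ {x | y < φ x} ≠ ∞) :
    Tendsto (fun y => μ {x | y < φ x}) atTop (𝓝 0) := by
  have hempty : ⋂ y : ℝ, {x | y < φ x} = ∅ :=
    eq_empty_iff_forall_notMem.2 fun x hx => lt_irrefl (φ x) (mem_iInter.1 hx (φ x))
  have := tendsto_measure_iInter_atTop (μ := μ) (s := fun y : ℝ => {x | y < φ x})
    (fun _ => nullMeasurableSet_lt aemeasurable_const hφ)
    (fun _ _ hab _ hx => lt_of_le_of_lt hab hx) hfin
  rwa [hempty, measure_empty] at this

lemma exists_lt_measure_lt_of_lt {u : ℝ} {c : ℝ≥0∞} (h : c < μ {x | u < φ x}) :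
    ∃ u' > u, c < μ {x | u' < φ x} := by
  have hU : {x | u < φ x} = ⋃ n : ℕ, {x | u + 1 / (n + 1) < φ x} := by
    ext x
    simp only [mem_ofPred_eq, mem_iUnion]
    refine ⟨fun hx => ?_, fun ⟨n, hn⟩ => (lt_add_of_pos_right u Nat.one_div_pos_of_nat).trans hn⟩
    obtain ⟨n, hn⟩ := exists_nat_one_div_lt (sub_pos.2 hx)
    exact ⟨n, by linarith⟩
  have hmono : Monotone fun n : ℕ => {x | u + 1 / ((n : ℝ) + 1) < φ x} :=
    fun m n hmn _ hx => lt_of_le_of_lt (add_le_add_right (Nat.one_div_le_one_div hmn) u) hx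
  rw [hU, hmono.measure_iUnion, lt_iSup_iff] at h
  obtain ⟨n, hn⟩ := h
  exact ⟨_, lt_add_of_pos_right u Nat.one_div_pos_of_nat, hn⟩

end Superlevel

lemma measurable_of_eqOn_Iic_of_antitoneOn_Ioi {g : ℝ → ℝ} {a : ℝ}
    (hconst : ∀ t ≤ a, g t = g a) (hanti : AntitoneOn g (Ioi a)) : Measurable g := by
  refine measurable_of_Ioi fun u => ?_
  have hsplit : g ⁻¹' Ioi u = Iic a ∩ {_t | u < g a} ∪ {t | u < g t} ∩ Ioi a := by
    ext t
    rcases le_or_gt t a with h | h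
    · simp [h, hconst t h, not_lt.2 h]
    · simp [h, not_le.2 h]
  rw [hsplit]
  refine (measurableSet_Iic.inter (MeasurableSet.const _)).union
    (OrdConnected.measurableSet ⟨fun x hx y hy z hz => ?_⟩)
  have hza : z ∈ Ioi a := lt_of_lt_of_le hx.2 hz.1
  exact ⟨hy.1.trans_le (hanti hza hy.2 hz.2), hza⟩

section Rearrangement

variable {f : ℝ → ℂ}

lemma rearrC_nonneg (f : ℝ → ℂ) (t : ℝ) : 0 ≤ rearrC f t :=
  Real.sSup_nonneg fun _ ⟨_, _, hy⟩ => hy ▸ Real.iInf_nonneg fun _ => norm_nonneg _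

lemma rearrC_eq_of_nonpos (f : ℝ → ℂ) {t : ℝ} (ht : t ≤ 0) : rearrC f t = rearrC f 0 := by
  simp only [rearrC, ENNReal.ofReal_of_nonpos ht, ENNReal.ofReal_zero]

lemma subset_of_lt_iInf_norm {E : Set ℝ} {u : ℝ} (h : u < ⨅ x : E, ‖f x‖) :
    E ⊆ {x | u < ‖f x‖} :=
  fun x hx => h.trans_le (ciInf_le ⟨0, by rintro _ ⟨y, rfl⟩; exact norm_nonneg _⟩ (⟨x, hx⟩ : E))

lemma ofReal_le_volume_of_lt_rearrC {t u : ℝ} (hu : 0 ≤ u) (h : u < rearrC f t) :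
    ENNReal.ofReal t ≤ volume {x | u < ‖f x‖} := by
  rw [rearrC] at h
  have hne : {y : ℝ | ∃ E : Set ℝ, volume E = ENNReal.ofReal t ∧ y = ⨅ x : E, ‖f x.1‖}.Nonempty :=
    nonempty_iff_ne_empty.2 fun he => by rw [he, Real.sSup_empty] at h; linarith
  obtain ⟨_, ⟨E, hE, rfl⟩, hlt⟩ := exists_lt_of_lt_csSup hne h
  exact hE ▸ measure_mono (subset_of_lt_iInf_norm hlt)

lemma le_rearrC_of_ofReal_le_volume (hf : Measurable f)
    (hfin : ∀ y : ℝ, 0 < y → volume {x : ℝ | y < ‖f x‖} < ⊤) {t u : ℝ} (ht : 0 < t) (hu : 0 < u)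
    (h : ENNReal.ofReal t ≤ volume {x | u < ‖f x‖}) : u ≤ rearrC f t := by
  obtain ⟨E, hEsub, hE⟩ := exists_subset_volume_eq (hfin u hu).ne h
  have : Nonempty E := (nonempty_of_measure_ne_zero
    (hE ▸ (ENNReal.ofReal_pos.2 ht).ne')).to_subtype
  obtain ⟨y₀, hy₀⟩ := ((tendsto_measure_lt_atTop_zero hf.norm.aemeasurable
    ⟨1, (hfin 1 one_pos).ne⟩).eventually (gt_mem_nhds (ENNReal.ofReal_pos.2 ht))).exists
  have hbdd : BddAbove
      {y : ℝ | ∃ E : Set ℝ, volume E = ENNReal.ofReal t ∧ y = ⨅ x : E, ‖f x.1‖} := by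
    refine ⟨y₀, ?_⟩
    rintro _ ⟨E', hE', rfl⟩
    by_contra! hlt
    exact hy₀.not_ge (hE' ▸ measure_mono (subset_of_lt_iInf_norm hlt))
  exact (le_ciInf fun x => (hEsub x.2).le).trans (le_csSup hbdd ⟨E, hE, rfl⟩)

lemma lt_rearrC_of_ofReal_lt_volume (hf : Measurable f)
    (hfin : ∀ y : ℝ, 0 < y → volume {x : ℝ | y < ‖f x‖} < ⊤) {t u : ℝ} (ht : 0 < t) (hu : 0 < u)
    (h : ENNReal.ofReal t < volume {x | u < ‖f x‖}) : u < rearrC f t := by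
  obtain ⟨u', huu', h'⟩ := exists_lt_measure_lt_of_lt h
  exact huu'.trans_le (le_rearrC_of_ofReal_le_volume hf hfin ht (hu.trans huu') h'.le)

lemma antitoneOn_rearrC (hf : Measurable f)
    (hfin : ∀ y : ℝ, 0 < y → volume {x : ℝ | y < ‖f x‖} < ⊤) : AntitoneOn (rearrC f) (Ioi 0) := by
  intro t ht t' _ htt'
  by_contra! hlt
  obtain ⟨u, hu, hu'⟩ := exists_between hlt
  have hu0 : 0 < u := (rearrC_nonneg f t).trans_lt hu
  exact hu.not_ge (le_rearrC_of_ofReal_le_volume hf hfin ht hu0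
    ((ENNReal.ofReal_le_ofReal htt').trans (ofReal_le_volume_of_lt_rearrC hu0.le hu')))

lemma measurable_rearrC (hf : Measurable f)
    (hfin : ∀ y : ℝ, 0 < y → volume {x : ℝ | y < ‖f x‖} < ⊤) : Measurable (rearrC f) :=
  measurable_of_eqOn_Iic_of_antitoneOn_Ioi (fun _ => rearrC_eq_of_nonpos f)
    (antitoneOn_rearrC hf hfin)

end Rearrangement

lemma restrict_Ioi_rearrC_le {f g : ℝ → ℂ} (hg : Measurable g)
    (hfinf : ∀ y : ℝ, 0 < y → volume {x : ℝ | y < ‖f x‖} < ⊤)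
    (hfing : ∀ y : ℝ, 0 < y → volume {x : ℝ | y < ‖g x‖} < ⊤) {u v : ℝ} (hu : 0 < u) (hv : 0 < v) :
    volume.restrict (Ioi 0) {t | u < rearrC f t ∧ rearrC g t ≤ v} ≤
      volume {x | u < ‖f x‖ ∧ ‖g x‖ ≤ v} := by
  set A := volume {x | u < ‖f x‖}
  set B := volume {x | v < ‖g x‖}
  have hA : A ≠ ∞ := (hfinf u hu).ne
  have hB : B ≠ ∞ := (hfing v hv).ne
  have hsub : {t | u < rearrC f t ∧ rearrC g t ≤ v} ∩ Ioi 0 ⊆ Icc B.toReal A.toReal := by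
    rintro t ⟨⟨hft, hgt⟩, ht⟩
    refine ⟨not_lt.1 fun hlt => hgt.not_gt ?_,
      (ENNReal.ofReal_le_iff_le_toReal hA).1 (ofReal_le_volume_of_lt_rearrC hu.le hft)⟩
    exact lt_rearrC_of_ofReal_lt_volume hg hfing ht hv
      ((ENNReal.ofReal_lt_iff_lt_toReal (le_of_lt ht) hB).2 hlt)
  have hcover : A ≤ volume {x | u < ‖f x‖ ∧ ‖g x‖ ≤ v} + B := by
    refine (measure_mono fun x hx => ?_).trans (measure_union_le _ _)
    by_cases h : ‖g x‖ ≤ v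
    · exact Or.inl ⟨hx, h⟩
    · exact Or.inr (not_le.1 h)
  calc volume.restrict (Ioi 0) {t | u < rearrC f t ∧ rearrC g t ≤ v}
      = volume ({t | u < rearrC f t ∧ rearrC g t ≤ v} ∩ Ioi 0) :=
        Measure.restrict_apply' measurableSet_Ioi
    _ ≤ ENNReal.ofReal (A.toReal - B.toReal) := (measure_mono hsub).trans_eq Real.volume_Icc
    _ = A - B := by
        rw [ENNReal.ofReal_sub _ ENNReal.toReal_nonneg, ENNReal.ofReal_toReal hA,
          ENNReal.ofReal_toReal hB]
    _ ≤ _ := tsub_le_iff_right.2 hcover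

lemma lintegral_Ioo_ofReal_eq_sub_of_hasDerivAt {g g' : ℝ → ℝ} {a b : ℝ} (hab : a ≤ b)
    (hcont : ContinuousOn g (Icc a b)) (hderiv : ∀ x ∈ Ioo a b, HasDerivAt g (g' x) x)
    (hpos : ∀ x ∈ Ioo a b, 0 ≤ g' x) :
    ∫⁻ x in Ioo a b, ENNReal.ofReal (g' x) = ENNReal.ofReal (g b - g a) := by
  have hint : IntegrableOn g' (Ioc a b) :=
    intervalIntegral.integrableOn_deriv_of_nonneg hcont hderiv hpos
  rw [← ofReal_integral_eq_lintegral_ofReal (hint.mono_set Ioo_subset_Ioc_self)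
      ((ae_restrict_mem measurableSet_Ioo).mono hpos), ← integral_Ioc_eq_integral_Ioo,
    ← intervalIntegral.integral_of_le hab,
    intervalIntegral.integral_eq_sub_of_hasDerivAt_of_le hab hcont hderiv
      ((intervalIntegrable_iff_integrableOn_Ioc_of_le hab).2 hint)]

lemma exists_measure_Iio_eq_rpow {p : ℝ} (hp : 1 ≤ p) :
    ∃ ρ : Measure ℝ, SFinite ρ ∧ ρ (Iio 0) = 0 ∧
      ∀ c, 0 < c → ρ (Iio c) = ENNReal.ofReal (p * c ^ (p - 1)) := by
  obtain rfl | hp := hp.eq_or_lt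
  · refine ⟨Measure.dirac 0, inferInstance, by simp, fun c hc => ?_⟩
    simp [Measure.dirac_apply' _ measurableSet_Iio, hc]
  refine ⟨(volume.restrict (Ioi 0)).withDensity
    fun s => ENNReal.ofReal (p * (p - 1) * s ^ (p - 2)), inferInstance, ?_, fun c hc => ?_⟩
  · rw [withDensity_apply _ measurableSet_Iio, Measure.restrict_restrict measurableSet_Iio,
      Iio_inter_Ioi, Ioo_self, Measure.restrict_empty, lintegral_zero_measure]
  rw [withDensity_apply _ measurableSet_Iio, Measure.restrict_restrict measurableSet_Iio,
    Iio_inter_Ioi,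
    lintegral_Ioo_ofReal_eq_sub_of_hasDerivAt (g := fun s => p * s ^ (p - 1)) hc.le
      (continuous_const.mul (Real.continuous_rpow_const (by linarith))).continuousOn
      (fun s hs => ((Real.hasDerivAt_rpow_const (Or.inl hs.1.ne')).const_mul p).congr_deriv
        (by rw [sub_sub, one_add_one_eq_two, mul_assoc]))
      (fun s hs => mul_nonneg (by nlinarith) (Real.rpow_nonneg hs.1.le _)),
    Real.zero_rpow (by linarith), mul_zero, sub_zero]

lemma lintegral_Ioo_ofReal_mul_rpow_sub {p : ℝ} (hp : 1 ≤ p) (a b : ℝ) :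
    ∫⁻ v in Ioo b a, ENNReal.ofReal (p * (a - v) ^ (p - 1)) = ENNReal.ofReal ((a - b)⁺ ^ p) := by
  rcases le_or_gt a b with hab | hab
  · rw [Ioo_eq_empty (not_lt.2 hab), Measure.restrict_empty, lintegral_zero_measure,
      posPart_eq_zero.2 (sub_nonpos.2 hab), Real.zero_rpow (by linarith), ENNReal.ofReal_zero]
  have hcont : Continuous fun v : ℝ => -(a - v) ^ p :=
    ((continuous_const.sub continuous_id).rpow_const fun _ => Or.inr (by linarith)).neg
  rw [lintegral_Ioo_ofReal_eq_sub_of_hasDerivAt hab.le hcont.continuousOn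
      (fun v _ => ((((hasDerivAt_id' v).const_sub a).rpow_const (Or.inr hp)).neg).congr_deriv
        (by ring))
      (fun v hv => mul_nonneg (by linarith) (Real.rpow_nonneg (sub_pos.2 hv.2).le _)),
    posPart_eq_self.2 (sub_nonneg.2 hab.le), sub_self, Real.zero_rpow (by linarith)]
  ring_nf

lemma exists_measure_posPart_rpow {p : ℝ} (hp : 1 ≤ p) :
    ∃ κ : Measure (ℝ × ℝ), SFinite κ ∧ (∀ᵐ w ∂κ, 0 < w.1 ∧ 0 < w.2) ∧
      ∀ a b, 0 ≤ b → κ {w | w.1 < a ∧ b ≤ w.2} = ENNReal.ofReal ((a - b)⁺ ^ p) := by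
  obtain ⟨ρ, _, hρ0, hρ⟩ := exists_measure_Iio_eq_rpow hp
  have hm : Measurable fun q : ℝ × ℝ => (q.1 + q.2, q.1) := by fun_prop
  refine ⟨((volume.restrict (Ioi 0)).prod ρ).map fun q => (q.1 + q.2, q.1), inferInstance,
    ?_, fun a b hb => ?_⟩
  · have hs : MeasurableSet {w : ℝ × ℝ | 0 < w.1 ∧ 0 < w.2} :=
      (measurableSet_lt measurable_const measurable_fst).inter
        (measurableSet_lt measurable_const measurable_snd)
    rw [ae_map_iff hm.aemeasurable hs]
    refine (Measure.ae_prod_iff_ae_ae (hm hs)).2 ?_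
    have hρ : ∀ᵐ s ∂ρ, 0 ≤ s := by
      rw [ae_iff]
      simp only [not_le]
      exact hρ0
    filter_upwards [ae_restrict_mem measurableSet_Ioi] with v hv
    filter_upwards [hρ] with s hs
    exact ⟨add_pos_of_pos_of_nonneg hv hs, hv⟩
  have hS : MeasurableSet {w : ℝ × ℝ | w.1 < a ∧ b ≤ w.2} :=
    (measurableSet_lt measurable_fst measurable_const).inter
      (measurableSet_le measurable_const measurable_snd)
  have hslice : ∀ v, ρ {s | v + s < a ∧ b ≤ v} =
      (Ico b a).indicator (fun v => ENNReal.ofReal (p * (a - v) ^ (p - 1))) v := by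
    intro v
    by_cases hbv : b ≤ v
    · have : {s | v + s < a ∧ b ≤ v} = Iio (a - v) := by
        ext s; simp [hbv, lt_sub_iff_add_lt']
      rcases lt_or_ge v a with hva | hva
      · rw [this, hρ _ (sub_pos.2 hva), indicator_of_mem (show v ∈ Ico b a from ⟨hbv, hva⟩)]
      · rw [this, indicator_of_notMem fun h : v ∈ Ico b a => not_lt.2 hva h.2]
        exact measure_mono_null (Iio_subset_Iio (sub_nonpos.2 hva)) hρ0
    · simp [hbv]
  have hae : (Ico b a ∩ Ioi 0 : Set ℝ) =ᵐ[volume] Ioo b a := by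
    refine (ae_eq_set_inter (ae_eq_refl _) Ioi_ae_eq_Ici).trans ?_
    rw [inter_eq_left.2 (show Ico b a ⊆ Ici 0 from fun x hx => hb.trans hx.1)]
    exact Ioo_ae_eq_Ico.symm
  rw [Measure.map_apply hm hS, Measure.prod_apply (hm hS)]
  simp only [preimage_ofPred_eq]
  rw [lintegral_congr hslice, lintegral_indicator measurableSet_Ico,
    Measure.restrict_restrict measurableSet_Ico, Measure.restrict_congr_set hae,
    lintegral_Ioo_ofReal_mul_rpow_sub hp]

section Comparison

variable {α β : Type*} [MeasurableSpace α] [MeasurableSpace β] {p : ℝ}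

lemma lintegral_ofReal_posPart_rpow_eq_lintegral_measure {κ : Measure (ℝ × ℝ)} [SFinite κ]
    (hκ : ∀ a b, 0 ≤ b → κ {w | w.1 < a ∧ b ≤ w.2} = ENNReal.ofReal ((a - b)⁺ ^ p))
    {μ : Measure α} [SFinite μ] {F G : α → ℝ} (hF : Measurable F) (hG : Measurable G)
    (hG0 : ∀ x, 0 ≤ G x) :
    ∫⁻ x, ENNReal.ofReal ((F x - G x)⁺ ^ p) ∂μ = ∫⁻ w, μ {x | w.1 < F x ∧ G x ≤ w.2} ∂κ := by
  have hS : MeasurableSet {q : α × (ℝ × ℝ) | q.2.1 < F q.1 ∧ G q.1 ≤ q.2.2} :=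
    (measurableSet_lt (measurable_fst.comp measurable_snd) (hF.comp measurable_fst)).inter
      (measurableSet_le (hG.comp measurable_fst) (measurable_snd.comp measurable_snd))
  simp_rw [← hκ _ _ (hG0 _)]
  exact (Measure.prod_apply hS).symm.trans (Measure.prod_apply_symm hS)

lemma lintegral_ofReal_posPart_rpow_le {μ : Measure α} {ν : Measure β} [SFinite μ] [SFinite ν]
    (hp : 1 ≤ p) {F G : α → ℝ} {φ ψ : β → ℝ} (hF : Measurable F) (hG : Measurable G)
    (hφ : Measurable φ) (hψ : Measurable ψ) (hG0 : ∀ x, 0 ≤ G x) (hψ0 : ∀ y, 0 ≤ ψ y)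
    (h : ∀ u v, 0 < u → 0 < v → μ {x | u < F x ∧ G x ≤ v} ≤ ν {y | u < φ y ∧ ψ y ≤ v}) :
    ∫⁻ x, ENNReal.ofReal ((F x - G x)⁺ ^ p) ∂μ ≤ ∫⁻ y, ENNReal.ofReal ((φ y - ψ y)⁺ ^ p) ∂ν := by
  obtain ⟨κ, _, hκ0, hκ⟩ := exists_measure_posPart_rpow hp
  rw [lintegral_ofReal_posPart_rpow_eq_lintegral_measure hκ hF hG hG0,
    lintegral_ofReal_posPart_rpow_eq_lintegral_measure hκ hφ hψ hψ0]
  exact lintegral_mono_ae (hκ0.mono fun w hw => h _ _ hw.1 hw.2)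

lemma ofReal_abs_sub_rpow {p : ℝ} (hp : 0 < p) (a b : ℝ) :
    ENNReal.ofReal (|a - b| ^ p) =
      ENNReal.ofReal ((a - b)⁺ ^ p) + ENNReal.ofReal ((b - a)⁺ ^ p) := by
  rcases le_total a b with h | h
  · rw [posPart_eq_zero.2 (sub_nonpos.2 h), posPart_eq_self.2 (sub_nonneg.2 h), abs_sub_comm,
      abs_of_nonneg (sub_nonneg.2 h), Real.zero_rpow hp.ne', ENNReal.ofReal_zero, zero_add]
  · rw [posPart_eq_zero.2 (sub_nonpos.2 h), posPart_eq_self.2 (sub_nonneg.2 h),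
      abs_of_nonneg (sub_nonneg.2 h), Real.zero_rpow hp.ne', ENNReal.ofReal_zero, add_zero]

theorem lintegral_ofReal_abs_sub_rpow_le {μ : Measure α} {ν : Measure β} [SFinite μ] [SFinite ν]
    (hp : 1 ≤ p) {F G : α → ℝ} {φ ψ : β → ℝ} (hF : Measurable F) (hG : Measurable G)
    (hφ : Measurable φ) (hψ : Measurable ψ) (hF0 : ∀ x, 0 ≤ F x) (hG0 : ∀ x, 0 ≤ G x)
    (hφ0 : ∀ y, 0 ≤ φ y) (hψ0 : ∀ y, 0 ≤ ψ y)
    (hFG : ∀ u v, 0 < u → 0 < v → μ {x | u < F x ∧ G x ≤ v} ≤ ν {y | u < φ y ∧ ψ y ≤ v})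
    (hGF : ∀ u v, 0 < u → 0 < v → μ {x | u < G x ∧ F x ≤ v} ≤ ν {y | u < ψ y ∧ φ y ≤ v}) :
    ∫⁻ x, ENNReal.ofReal (|F x - G x| ^ p) ∂μ ≤ ∫⁻ y, ENNReal.ofReal (|φ y - ψ y| ^ p) ∂ν := by
  have hp0 : 0 < p := by linarith
  simp only [ofReal_abs_sub_rpow hp0]
  rw [lintegral_add_left (by fun_prop), lintegral_add_left (by fun_prop)]
  exact add_le_add (lintegral_ofReal_posPart_rpow_le hp hF hG hφ hψ hG0 hψ0 hFG)
    (lintegral_ofReal_posPart_rpow_le hp hG hF hψ hφ hF0 hφ0 hGF)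

end Comparison

/-- Nonexpansivity of the nonincreasing rearrangement in L^p:
∫_0^∞ |f*(t) − g*(t)|^p dt ≤ ∫_ℝ |f(x) − g(x)|^p dx. -/
theorem stmt17 (p : ℝ) (hp : 1 ≤ p) (f g : ℝ → ℂ)
    (hfmeas : Measurable f) (hgmeas : Measurable g)
    (hf : ∀ y : ℝ, 0 < y → volume {x : ℝ | y < ‖f x‖} < ⊤)
    (hg : ∀ y : ℝ, 0 < y → volume {x : ℝ | y < ‖g x‖} < ⊤) :
    (∫⁻ t in Set.Ioi (0:ℝ), ENNReal.ofReal (|rearrC f t - rearrC g t| ^ p))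
      ≤ ∫⁻ x : ℝ, ENNReal.ofReal (‖f x - g x‖ ^ p) :=
  calc (∫⁻ t in Ioi 0, ENNReal.ofReal (|rearrC f t - rearrC g t| ^ p))
      ≤ ∫⁻ x, ENNReal.ofReal (|‖f x‖ - ‖g x‖| ^ p) :=
        lintegral_ofReal_abs_sub_rpow_le hp (measurable_rearrC hfmeas hf)
          (measurable_rearrC hgmeas hg) hfmeas.norm hgmeas.norm (rearrC_nonneg f)
          (rearrC_nonneg g) (fun _ => norm_nonneg _) (fun _ => norm_nonneg _)
          (fun _ _ hu hv => restrict_Ioi_rearrC_le hgmeas hf hg hu hv)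
          (fun _ _ hu hv => restrict_Ioi_rearrC_le hfmeas hg hf hu hv)
    _ ≤ ∫⁻ x, ENNReal.ofReal (‖f x - g x‖ ^ p) :=
        lintegral_mono fun x => ENNReal.ofReal_le_ofReal
          (Real.rpow_le_rpow (abs_nonneg _) (abs_norm_sub_norm_le _ _) (by linarith))
end

section
/- Let 1 ≤ p < ∞, n ≥ 2, and let f ∈ L^p(ℝ_+^n) be nonnegative and nonincreasing in each variable. Let μ > 1, 1 ≤ k ≤ n, and h > 0. Then (∫_{ℝ_+^{n−1}} ∫_h^∞ u^{−p} [f(u, ŷ) − f(μu, ŷ)]^p du dŷ)^{1/p} ≤ 4μ · ω_k(f;h)_p / h, where the inner integral is in the k-th variable and ŷ ranges over the remaining n−1 variables. -/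
/-!
Fix a fibre `φ(t) = f(t, ŷ)`, nonincreasing in `t`, and `u > h`. With `N = ⌈(μ - 1) u / h⌉`
the points `u, u + h, …, u + N h` climb past `μ u`, so telescoping and the power-mean inequality
bound `(φ(u) - φ(μu))^p` by `N^{p-1} ∑_{j<N} Δ(u + jh)^p`, where `Δ(z) = φ(z) - φ(z + h)`.
Since `N ≤ μu/h` and `u + jh ≤ μu`, this gives
`u^{-p} (φ(u) - φ(μu))^p ≤ μ^p h^{1-p} ∑_j (u + jh)⁻¹ Δ(u + jh)^p`.
After the substitution `z = u + jh`, a point `z` is hit by at most `z / h` indices `j`, which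
cancels the weight `z⁻¹`: the left side integrates to at most `(μ/h)^p ∫_h^∞ Δ^p`.
Integrating over `ŷ` (Tonelli) bounds the whole double integral by
`(μ/h)^p ‖f(· + h e_k) - f‖_p^p ≤ (μ ω_k(f;h)_p / h)^p`.
-/

open MeasureTheory Set
open scoped ENNReal

def insertCoord {n : ℕ} (k : Fin n) (u : ℝ) (y : {i : Fin n // i ≠ k} → ℝ) : Fin n → ℝ :=
  fun i => if h : i = k then u else y ⟨i, h⟩

def orthant (n : ℕ) : Set (Fin n → ℝ) := {x | ∀ i, 0 < x i}

noncomputable def omegaOrth {n : ℕ} (p : ℝ) (f : (Fin n → ℝ) → ℝ) (k : Fin n) (h : ℝ) : ℝ :=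
  sSup {y : ℝ | ∃ u : ℝ, 0 ≤ u ∧ u ≤ h ∧
    y = (∫ x in orthant n, |f (x + u • (Pi.single k 1 : Fin n → ℝ)) - f x| ^ p) ^ (1 / p)}

theorem tsum_indicator_Ioi_add_le {G : ℝ → ℝ≥0∞} {h z : ℝ} (hh : 0 < h) (hz : 0 < z) :
    ∑' j : ℕ, (Ioi (h + j * h)).indicator G z ≤ ENNReal.ofReal (z / h) * G z := by
  set M := ⌊z / h⌋₊
  have hsupp : ∀ j ∉ Finset.range M, (Ioi (h + j * h)).indicator G z = 0 := by
    intro j hj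
    refine indicator_of_notMem (fun hzj : h + j * h < z => hj ?_) _
    rw [Finset.mem_range, ← Nat.cast_lt (α := ℝ)]
    calc (j : ℝ) < z / h - 1 := by rw [lt_sub_iff_add_lt, lt_div_iff₀ hh]; linarith
      _ < M := by linarith [Nat.lt_floor_add_one (z / h)]
  calc ∑' j : ℕ, (Ioi (h + j * h)).indicator G z
      = ∑ j ∈ Finset.range M, (Ioi (h + j * h)).indicator G z := tsum_eq_sum hsupp
    _ ≤ ∑ _j ∈ Finset.range M, G z := Finset.sum_le_sum fun j _ => indicator_le_self _ _ _
    _ = M * G z := by rw [Finset.sum_const, Finset.card_range, nsmul_eq_mul]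
    _ ≤ ENNReal.ofReal (z / h) * G z := by
        gcongr
        rw [← ENNReal.ofReal_natCast]
        exact ENNReal.ofReal_le_ofReal (Nat.floor_le (by positivity))

theorem tsum_setLIntegral_Ioi_comp_add_le {G : ℝ → ℝ≥0∞} {h : ℝ} (hh : 0 < h)
    (hG : AEMeasurable G (volume.restrict (Ioi h))) :
    ∑' j : ℕ, ∫⁻ u in Ioi h, G (u + j * h) ≤ ∫⁻ z in Ioi h, ENNReal.ofReal (z / h) * G z := by
  have hshift : ∀ j : ℕ, ∫⁻ u in Ioi h, G (u + j * h)
      = ∫⁻ z in Ioi h, (Ioi (h + j * h)).indicator G z := by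
    intro j
    have hpre : (· + (j : ℝ) * h) ⁻¹' Ioi (h + j * h) = Ioi h := by
      rw [preimage_add_const_Ioi, add_sub_cancel_right]
    rw [lintegral_indicator measurableSet_Ioi, ← hpre,
      (measurePreserving_add_right volume _).setLIntegral_comp_preimage_emb
        (measurableEmbedding_addRight _), hpre,
      Measure.restrict_restrict measurableSet_Ioi,
      inter_eq_left.2 (Ioi_subset_Ioi (le_add_of_nonneg_right (by positivity)))]
  simp_rw [hshift]
  rw [← lintegral_tsum fun j => hG.indicator measurableSet_Ioi]
  exact setLIntegral_mono' measurableSet_Ioi fun z hz =>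
    tsum_indicator_Ioi_add_le hh (hh.trans hz)

section Antitone

variable {φ : ℝ → ℝ}

theorem AntitoneOn.sub_nonneg_of_le {h a b : ℝ} (hφ : AntitoneOn φ (Ici h))
    (ha : h ≤ a) (hab : a ≤ b) : 0 ≤ φ a - φ b :=
  sub_nonneg.2 (hφ ha (ha.trans hab) hab)

theorem AntitoneOn.aemeasurable_comp_add {h c : ℝ} (hφ : AntitoneOn φ (Ici h))
    (hc : 0 ≤ c) : AEMeasurable (fun u => φ (u + c)) (volume.restrict (Ioi h)) :=
  aemeasurable_restrict_of_antitoneOn measurableSet_Ioi fun a ha b hb hab =>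
    hφ (show h ≤ a + c by linarith [mem_Ioi.1 ha]) (show h ≤ b + c by linarith [mem_Ioi.1 hb])
      (by linarith)

theorem AntitoneOn.rpow_sub_le_card_mul_sum {a b h p : ℝ} (hφ : AntitoneOn φ (Ici a))
    (hh : 0 ≤ h) (hp : 1 ≤ p) {N : ℕ} (hab : a ≤ b) (hb : b ≤ a + N * h) :
    (φ a - φ b) ^ p
      ≤ (N : ℝ) ^ (p - 1) * ∑ j ∈ Finset.range N, (φ (a + j * h) - φ (a + j * h + h)) ^ p := by
  have htel := Finset.sum_range_sub' (fun j : ℕ => φ (a + j * h)) N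
  simp only [Nat.cast_succ, add_mul, one_mul, ← add_assoc, Nat.cast_zero, zero_mul,
    add_zero] at htel
  have hsub : φ a - φ b ≤ ∑ j ∈ Finset.range N, (φ (a + j * h) - φ (a + j * h + h)) := by
    rw [htel]
    linarith [hφ hab (hab.trans hb) hb]
  have hpow := Real.rpow_sum_le_const_mul_sum_rpow_of_nonneg (s := Finset.range N)
    (f := fun j : ℕ => φ (a + j * h) - φ (a + j * h + h)) hp fun j _ =>
      hφ.sub_nonneg_of_le (le_add_of_nonneg_right (by positivity)) (le_add_of_nonneg_right hh)
  rw [Finset.card_range] at hpow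
  exact (Real.rpow_le_rpow (hφ.sub_nonneg_of_le le_rfl hab) hsub (by linarith)).trans hpow

theorem AntitoneOn.rpow_sub_dilate_le_sum {p μ h u : ℝ} (hφ : AntitoneOn φ (Ici h))
    (hp : 1 ≤ p) (hμ : 1 < μ) (hh : 0 < h) (hu : h < u) :
    u ^ (-p) * (φ u - φ (μ * u)) ^ p ≤ μ ^ p * h ^ (1 - p) *
      ∑ j ∈ Finset.range ⌈(μ - 1) * u / h⌉₊,
        (u + j * h)⁻¹ * (φ (u + j * h) - φ (u + j * h + h)) ^ p := by
  set N := ⌈(μ - 1) * u / h⌉₊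
  have hu0 : 0 < u := hh.trans hu
  have hμ0 : 0 < μ := zero_lt_one.trans hμ
  have hφu : AntitoneOn φ (Ici u) := hφ.mono (Ici_subset_Ici.2 hu.le)
  have hN : (μ - 1) * u ≤ N * h := (div_le_iff₀ hh).1 (Nat.le_ceil _)
  have hNle : (N : ℝ) ≤ μ * u / h := by
    have h1 := Nat.ceil_lt_add_one (show 0 ≤ (μ - 1) * u / h by positivity)
    have h2 : 1 ≤ u / h := (one_le_div hh).2 hu.le
    have h3 : (μ - 1) * u / h + u / h = μ * u / h := by ring
    linarith
  have hpow := hφu.rpow_sub_le_card_mul_sum hh.le hp (le_mul_of_one_le_left hu0.le hμ.le)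
    (show μ * u ≤ u + N * h by linarith)
  have hΔ : ∀ j : ℕ, 0 ≤ (φ (u + j * h) - φ (u + j * h + h)) ^ p := fun j =>
    Real.rpow_nonneg (hφu.sub_nonneg_of_le (le_add_of_nonneg_right (by positivity))
      (le_add_of_nonneg_right hh.le)) _
  have hconst : u ^ (-p) * (N : ℝ) ^ (p - 1) ≤ μ ^ (p - 1) * h ^ (1 - p) * u⁻¹ :=
    calc u ^ (-p) * (N : ℝ) ^ (p - 1) ≤ u ^ (-p) * (μ * u / h) ^ (p - 1) := by gcongr
      _ = μ ^ (p - 1) * h ^ (1 - p) * u⁻¹ := by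
          rw [Real.div_rpow (by positivity) hh.le, Real.mul_rpow hμ0.le hu0.le,
            show 1 - p = -(p - 1) by ring, Real.rpow_neg hh.le, Real.rpow_neg hu0.le,
            Real.rpow_sub_one hu0.ne']
          field_simp
  have hshift : ∀ j ∈ Finset.range N, u⁻¹ ≤ μ * (u + j * h)⁻¹ := fun j hj => by
    have hj : (j : ℝ) * h < (μ - 1) * u :=
      (lt_div_iff₀ hh).1 (Nat.lt_ceil.1 (Finset.mem_range.1 hj))
    rw [← div_eq_mul_inv, inv_eq_one_div, div_le_div_iff₀ hu0 (by positivity)]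
    linarith
  calc u ^ (-p) * (φ u - φ (μ * u)) ^ p
      ≤ (u ^ (-p) * (N : ℝ) ^ (p - 1)) *
          ∑ j ∈ Finset.range N, (φ (u + j * h) - φ (u + j * h + h)) ^ p := by
        rw [mul_assoc]; gcongr
    _ ≤ μ ^ (p - 1) * h ^ (1 - p) * ∑ j ∈ Finset.range N,
          u⁻¹ * (φ (u + j * h) - φ (u + j * h + h)) ^ p := by
        rw [← Finset.mul_sum, ← mul_assoc]
        gcongr
        exact Finset.sum_nonneg fun j _ => hΔ j
    _ ≤ μ ^ (p - 1) * h ^ (1 - p) * ∑ j ∈ Finset.range N,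
          μ * (u + j * h)⁻¹ * (φ (u + j * h) - φ (u + j * h + h)) ^ p := by
        gcongr with j hj
        · exact hΔ j
        · exact hshift j hj
    _ = μ ^ p * h ^ (1 - p) * ∑ j ∈ Finset.range N,
          (u + j * h)⁻¹ * (φ (u + j * h) - φ (u + j * h + h)) ^ p := by
        rw [Real.rpow_sub_one hμ0.ne', Finset.mul_sum, Finset.mul_sum]
        refine Finset.sum_congr rfl fun j _ => ?_
        field_simp

theorem AntitoneOn.enorm_rpow_sub_dilate_le_tsum {p μ h u : ℝ} (hφ : AntitoneOn φ (Ici h))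
    (hp : 1 ≤ p) (hμ : 1 < μ) (hh : 0 < h) (hu : h < u) :
    ‖u ^ (-p) * (φ u - φ (μ * u)) ^ p‖ₑ ≤ ENNReal.ofReal (μ ^ p * h ^ (1 - p)) *
      ∑' j : ℕ, ENNReal.ofReal ((u + j * h)⁻¹ * (φ (u + j * h) - φ (u + j * h + h)) ^ p) := by
  have hu0 : 0 < u := hh.trans hu
  have hterm : ∀ j : ℕ, 0 ≤ (u + j * h)⁻¹ * (φ (u + j * h) - φ (u + j * h + h)) ^ p :=
    fun j => mul_nonneg (by positivity) (Real.rpow_nonneg (hφ.sub_nonneg_of_le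
      (hu.le.trans (le_add_of_nonneg_right (by positivity))) (by linarith)) _)
  rw [Real.enorm_eq_ofReal (mul_nonneg (Real.rpow_nonneg hu0.le _) (Real.rpow_nonneg
    (hφ.sub_nonneg_of_le hu.le (le_mul_of_one_le_left hu0.le hμ.le)) _))]
  calc _ ≤ ENNReal.ofReal (μ ^ p * h ^ (1 - p) * ∑ j ∈ Finset.range ⌈(μ - 1) * u / h⌉₊,
          (u + j * h)⁻¹ * (φ (u + j * h) - φ (u + j * h + h)) ^ p) :=
        ENNReal.ofReal_le_ofReal (hφ.rpow_sub_dilate_le_sum hp hμ hh hu)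
    _ ≤ _ := by
        rw [ENNReal.ofReal_mul (by positivity), ENNReal.ofReal_sum_of_nonneg fun j _ => hterm j]
        gcongr
        exact ENNReal.sum_le_tsum _

theorem AntitoneOn.lintegral_rpow_sub_dilate_le {p μ h : ℝ}
    (hφ : AntitoneOn φ (Ici h)) (hp : 1 ≤ p) (hμ : 1 < μ) (hh : 0 < h) :
    ∫⁻ u in Ioi h, ‖u ^ (-p) * (φ u - φ (μ * u)) ^ p‖ₑ
      ≤ ENNReal.ofReal ((μ / h) ^ p) * ∫⁻ z in Ioi h, ‖φ (z + h) - φ z‖ₑ ^ p := by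
  set G : ℝ → ℝ≥0∞ := fun z => ENNReal.ofReal (z⁻¹ * (φ z - φ (z + h)) ^ p)
  have hGshift : ∀ c : ℝ, 0 ≤ c → AEMeasurable (fun u => G (u + c)) (volume.restrict (Ioi h)) :=
    fun c hc => by
      have hφc := hφ.aemeasurable_comp_add (add_nonneg hc hh.le)
      simp only [← add_assoc] at hφc
      exact (((measurable_add_const c).inv.aemeasurable.mul
        (((hφ.aemeasurable_comp_add hc).sub hφc).pow_const p))).ennreal_ofReal
  have hcancel : ∀ z ∈ Ioi h, ENNReal.ofReal (z / h) * G z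
      = ENNReal.ofReal h⁻¹ * ‖φ (z + h) - φ z‖ₑ ^ p := fun z hz => by
    have hΔ := hφ.sub_nonneg_of_le (a := z) (le_of_lt hz) (le_add_of_nonneg_right hh.le)
    have hz : 0 < z := hh.trans hz
    rw [← enorm_neg, neg_sub, Real.enorm_eq_ofReal hΔ,
      ENNReal.ofReal_rpow_of_nonneg hΔ (by linarith), ← ENNReal.ofReal_mul (by positivity),
      ← ENNReal.ofReal_mul (by positivity)]
    congr 1
    field_simp
  calc ∫⁻ u in Ioi h, ‖u ^ (-p) * (φ u - φ (μ * u)) ^ p‖ₑ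
      ≤ ∫⁻ u in Ioi h, ENNReal.ofReal (μ ^ p * h ^ (1 - p)) * ∑' j : ℕ, G (u + j * h) :=
        setLIntegral_mono' measurableSet_Ioi fun u hu =>
          hφ.enorm_rpow_sub_dilate_le_tsum hp hμ hh hu
    _ = ENNReal.ofReal (μ ^ p * h ^ (1 - p)) * ∑' j : ℕ, ∫⁻ u in Ioi h, G (u + j * h) := by
        rw [lintegral_const_mul' _ _ ENNReal.ofReal_ne_top,
          lintegral_tsum fun j => hGshift _ (by positivity)]
    _ ≤ ENNReal.ofReal (μ ^ p * h ^ (1 - p)) *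
          ∫⁻ z in Ioi h, ENNReal.ofReal (z / h) * G z := by
        gcongr
        simpa only [add_zero] using tsum_setLIntegral_Ioi_comp_add_le hh (hGshift 0 le_rfl)
    _ = ENNReal.ofReal ((μ / h) ^ p) * ∫⁻ z in Ioi h, ‖φ (z + h) - φ z‖ₑ ^ p := by
        rw [setLIntegral_congr_fun measurableSet_Ioi hcancel, lintegral_const_mul' _ _
          ENNReal.ofReal_ne_top, ← mul_assoc, ← ENNReal.ofReal_mul (by positivity)]
        congr 2
        rw [Real.div_rpow (by positivity) hh.le, show 1 - p = -(p - 1) by ring,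
          Real.rpow_neg hh.le, Real.rpow_sub_one hh.ne']
        field_simp

end Antitone

section Translate

variable {G E : Type*} [AddGroup G] [MeasurableSpace G] [MeasurableAdd G] {μ : Measure G}
  [μ.IsAddRightInvariant] [NormedAddCommGroup E] {s : Set G} {c : G} {p : ℝ≥0∞} {f : G → E}

theorem map_add_right_restrict_le (hs : ∀ x ∈ s, x + c ∈ s) :
    (μ.restrict s).map (· + c) ≤ μ.restrict s := by
  refine Measure.le_iff.2 fun t ht => ?_
  rw [Measure.map_apply (measurable_add_const c) ht,
    Measure.restrict_apply (measurable_add_const c ht), Measure.restrict_apply ht,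
    ← measure_preimage_add_right μ c (t ∩ s)]
  exact measure_mono fun x hx => ⟨hx.1, hs x hx.2⟩

theorem MeasureTheory.MemLp.comp_add_right (hf : MemLp f p (μ.restrict s))
    (hs : ∀ x ∈ s, x + c ∈ s) : MemLp (fun x => f (x + c)) p (μ.restrict s) :=
  (hf.mono_measure (map_add_right_restrict_le hs)).comp_of_map
    (measurable_add_const c).aemeasurable

theorem eLpNorm_comp_add_right_le (hf : AEStronglyMeasurable f (μ.restrict s))
    (hs : ∀ x ∈ s, x + c ∈ s) :
    eLpNorm (fun x => f (x + c)) p (μ.restrict s) ≤ eLpNorm f p (μ.restrict s) := by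
  have hle := map_add_right_restrict_le (μ := μ) hs
  calc eLpNorm (f ∘ (· + c)) p (μ.restrict s)
      = eLpNorm f p ((μ.restrict s).map (· + c)) :=
        (eLpNorm_map_measure (hf.mono_measure hle) (measurable_add_const c).aemeasurable).symm
    _ ≤ eLpNorm f p (μ.restrict s) := eLpNorm_mono_measure f hle

theorem eLpNorm_comp_add_right_sub_le (hp : 1 ≤ p) (hf : AEStronglyMeasurable f (μ.restrict s))
    (hs : ∀ x ∈ s, x + c ∈ s) :
    eLpNorm (fun x => f (x + c) - f x) p (μ.restrict s) ≤ 2 * eLpNorm f p (μ.restrict s) :=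
  calc eLpNorm (fun x => f (x + c) - f x) p (μ.restrict s)
      ≤ eLpNorm (fun x => f (x + c)) p (μ.restrict s) + eLpNorm f p (μ.restrict s) :=
        eLpNorm_sub_le (hf.comp_quasiMeasurePreserving
          ⟨measurable_add_const c, (map_add_right_restrict_le hs).absolutelyContinuous⟩) hf hp
    _ ≤ 2 * eLpNorm f p (μ.restrict s) := by
        rw [two_mul]
        gcongr
        exact eLpNorm_comp_add_right_le hf hs

end Translate

theorem measurableSet_setOf_forall_pos {ι : Type*} [Countable ι] :
    MeasurableSet {x : ι → ℝ | ∀ i, 0 < x i} := by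
  simp only [ofPred_forall]
  exact .iInter fun i => measurableSet_lt measurable_const (measurable_pi_apply i)

theorem add_smul_single_mem_orthant {n : ℕ} (k : Fin n) {u : ℝ} (hu : 0 ≤ u) :
    ∀ x ∈ orthant n, x + u • (Pi.single k 1 : Fin n → ℝ) ∈ orthant n := fun x hx i => by
  by_cases hik : i = k
  · subst hik; simpa using add_pos_of_pos_of_nonneg (hx i) hu
  · simpa [hik] using hx i

section Modulus

variable {n : ℕ} {p : ℝ} {f : (Fin n → ℝ) → ℝ} {k : Fin n}

theorem omegaOrth_nonneg (h : ℝ) : 0 ≤ omegaOrth p f k h :=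
  Real.sSup_nonneg fun _ ⟨_, _, _, hy⟩ =>
    hy ▸ Real.rpow_nonneg (integral_nonneg fun _ => Real.rpow_nonneg (abs_nonneg _) _) _

theorem eLpNorm_translate_sub_eq_integral (hp : 0 < p)
    (hf : MemLp f (ENNReal.ofReal p) (volume.restrict (orthant n))) {u : ℝ} (hu : 0 ≤ u) :
    eLpNorm (fun x => f (x + u • (Pi.single k 1 : Fin n → ℝ)) - f x) (ENNReal.ofReal p)
        (volume.restrict (orthant n))
      = ENNReal.ofReal
          ((∫ x in orthant n, |f (x + u • (Pi.single k 1 : Fin n → ℝ)) - f x| ^ p) ^ (1 / p)) := by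
  have hg : MemLp (fun x => f (x + u • (Pi.single k 1 : Fin n → ℝ)) - f x) (ENNReal.ofReal p)
      (volume.restrict (orthant n)) :=
    (hf.comp_add_right (add_smul_single_mem_orthant k hu)).sub hf
  rw [hg.eLpNorm_eq_integral_rpow_norm (by simpa using hp) ENNReal.ofReal_ne_top,
    ENNReal.toReal_ofReal hp.le, one_div]
  rfl

theorem eLpNorm_translate_sub_le_omegaOrth (hp : 1 ≤ p)
    (hf : MemLp f (ENNReal.ofReal p) (volume.restrict (orthant n))) {u h : ℝ} (hu : 0 ≤ u)
    (huh : u ≤ h) :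
    eLpNorm (fun x => f (x + u • (Pi.single k 1 : Fin n → ℝ)) - f x) (ENNReal.ofReal p)
        (volume.restrict (orthant n))
      ≤ ENNReal.ofReal (omegaOrth p f k h) := by
  have hp0 : 0 < p := zero_lt_one.trans_le hp
  have hbdd : BddAbove {y : ℝ | ∃ u : ℝ, 0 ≤ u ∧ u ≤ h ∧
      y = (∫ x in orthant n, |f (x + u • (Pi.single k 1 : Fin n → ℝ)) - f x| ^ p) ^ (1 / p)} := by
    refine ⟨(2 * eLpNorm f (ENNReal.ofReal p) (volume.restrict (orthant n))).toReal, ?_⟩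
    rintro _ ⟨v, hv, -, rfl⟩
    rw [← ENNReal.toReal_ofReal (Real.rpow_nonneg (integral_nonneg fun _ =>
      Real.rpow_nonneg (abs_nonneg _) _) _), ← eLpNorm_translate_sub_eq_integral hp0 hf hv]
    exact ENNReal.toReal_mono (ENNReal.mul_ne_top ENNReal.ofNat_ne_top hf.eLpNorm_ne_top)
      (eLpNorm_comp_add_right_sub_le (ENNReal.one_le_ofReal.2 hp) hf.1
        (add_smul_single_mem_orthant k hv))
  rw [eLpNorm_translate_sub_eq_integral hp0 hf hu]
  exact ENNReal.ofReal_le_ofReal (le_csSup hbdd ⟨u, hu, huh, rfl⟩)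

theorem lintegral_translate_sub_rpow_le_omegaOrth (hp : 1 ≤ p)
    (hf : MemLp f (ENNReal.ofReal p) (volume.restrict (orthant n))) {h : ℝ} (hh : 0 ≤ h) :
    ∫⁻ x in orthant n, ‖f (x + h • (Pi.single k 1 : Fin n → ℝ)) - f x‖ₑ ^ p
      ≤ ENNReal.ofReal (omegaOrth p f k h) ^ p := by
  have hp0 : 0 < p := zero_lt_one.trans_le hp
  have := eLpNorm_translate_sub_le_omegaOrth (k := k) hp hf hh le_rfl
  rw [eLpNorm_eq_eLpNorm' (by simpa using hp0) ENNReal.ofReal_ne_top,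
    ENNReal.toReal_ofReal hp0.le] at this
  rw [lintegral_rpow_enorm_eq_rpow_eLpNorm' hp0]
  gcongr

end Modulus

namespace InsertCoord

variable {n : ℕ} (k : Fin n)

instance uniqueNotNe : Unique {i : Fin n // ¬i ≠ k} :=
  ⟨⟨⟨k, not_not_intro rfl⟩⟩, fun i => Subtype.ext (not_not.mp i.2)⟩

noncomputable def equiv : ({i : Fin n // i ≠ k} → ℝ) × ℝ ≃ᵐ (Fin n → ℝ) :=
  ((MeasurableEquiv.refl _).prodCongr (MeasurableEquiv.funUnique _ ℝ).symm).trans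
    (MeasurableEquiv.piEquivPiSubtypeProd (fun _ => ℝ) (· ≠ k)).symm

theorem equiv_apply (y : {i : Fin n // i ≠ k} → ℝ) (u : ℝ) :
    equiv k (y, u) = insertCoord k u y := by
  funext i
  by_cases hik : i = k
  · subst hik; simp [equiv, insertCoord]; rfl
  · simp [equiv, insertCoord, hik]; rfl

theorem measurePreserving_equiv : MeasurePreserving (equiv k) (volume.prod volume) volume := by
  refine (volume_preserving_piEquivPiSubtypeProd (fun _ : Fin n => ℝ) (· ≠ k)).symm.comp ?_
  convert (MeasurePreserving.id (volume : Measure ({i : Fin n // i ≠ k} → ℝ))).prod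
    (volume_preserving_funUnique {i : Fin n // ¬i ≠ k} ℝ).symm using 2
  · rfl
  -- the two measures differ only in the `Fintype` instance on `{i // ¬i ≠ k}`
  · rw [Measure.volume_eq_prod]
    congr 1
    congr
    exact Subsingleton.elim _ _

end InsertCoord

section InsertCoordLemmas

variable {n : ℕ} {k : Fin n}

theorem insertCoord_mem_orthant_iff {y : {i : Fin n // i ≠ k} → ℝ} {u : ℝ} :
    insertCoord k u y ∈ orthant n ↔ (∀ i, 0 < y i) ∧ 0 < u := by
  refine ⟨fun hx => ⟨fun i => by simpa [insertCoord, i.2] using hx i,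
    by simpa [insertCoord] using hx k⟩, fun ⟨hy, hu⟩ i => ?_⟩
  by_cases hik : i = k
  · simpa [insertCoord, hik] using hu
  · simpa [insertCoord, hik] using hy ⟨i, hik⟩

theorem insertCoord_le_insertCoord {y : {i : Fin n // i ≠ k} → ℝ} {u v : ℝ} (huv : u ≤ v)
    (i : Fin n) : insertCoord k u y i ≤ insertCoord k v y i := by
  by_cases hik : i = k <;> simp [insertCoord, hik, huv]

theorem insertCoord_add_smul_single (y : {i : Fin n // i ≠ k} → ℝ) (u c : ℝ) :
    insertCoord k u y + c • (Pi.single k 1 : Fin n → ℝ) = insertCoord k (u + c) y := by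
  funext i
  by_cases hik : i = k
  · subst hik; simp [insertCoord]
  · simp [insertCoord, hik]

theorem lintegral_orthant_eq_lintegral_insertCoord (F : (Fin n → ℝ) → ℝ≥0∞)
    (hF : AEMeasurable F (volume.restrict (orthant n))) :
    ∫⁻ y in {y : {i : Fin n // i ≠ k} → ℝ | ∀ i, 0 < y i}, ∫⁻ u in Ioi 0, F (insertCoord k u y)
      = ∫⁻ x in orthant n, F x := by
  have hpre : InsertCoord.equiv k ⁻¹' orthant n = {y | ∀ i, 0 < y i} ×ˢ Ioi 0 := by
    ext ⟨y, u⟩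
    simp [InsertCoord.equiv_apply, insertCoord_mem_orthant_iff]
  have hmp := InsertCoord.measurePreserving_equiv k
  have hF' : AEMeasurable (fun w => F (InsertCoord.equiv k w))
      ((volume.prod volume).restrict ({y | ∀ i, 0 < y i} ×ˢ Ioi 0)) :=
    hpre ▸ hF.comp_quasiMeasurePreserving
      (hmp.restrict_preimage measurableSet_setOf_forall_pos).quasiMeasurePreserving
  rw [← hmp.setLIntegral_comp_preimage_emb (InsertCoord.equiv k).measurableEmbedding, hpre,
    setLIntegral_prod _ hF']
  simp only [InsertCoord.equiv_apply]

theorem lintegral_insertCoord_rpow_sub_dilate_le {p μ h : ℝ} {f : (Fin n → ℝ) → ℝ}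
    (hp : 1 ≤ p) (hf : MemLp f (ENNReal.ofReal p) (volume.restrict (orthant n)))
    (hdec : ∀ x y : Fin n → ℝ, x ∈ orthant n → (∀ i, x i ≤ y i) → f y ≤ f x)
    (hμ : 1 < μ) (hh : 0 < h) :
    ∫⁻ y in {y : {i : Fin n // i ≠ k} → ℝ | ∀ i, 0 < y i}, ∫⁻ u in Ioi h,
        ‖u ^ (-p) * (f (insertCoord k u y) - f (insertCoord k (μ * u) y)) ^ p‖ₑ
      ≤ ENNReal.ofReal ((μ / h) ^ p) *
          ∫⁻ x in orthant n, ‖f (x + h • (Pi.single k 1 : Fin n → ℝ)) - f x‖ₑ ^ p := by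
  set F : (Fin n → ℝ) → ℝ≥0∞ := fun x => ‖f (x + h • (Pi.single k 1 : Fin n → ℝ)) - f x‖ₑ ^ p
  have hF : AEMeasurable F (volume.restrict (orthant n)) :=
    ((hf.comp_add_right (add_smul_single_mem_orthant k hh.le)).1.sub hf.1).enorm.pow_const p
  have hanti : ∀ y ∈ {y : {i : Fin n // i ≠ k} → ℝ | ∀ i, 0 < y i},
      AntitoneOn (fun t => f (insertCoord k t y)) (Ici h) := fun y hy _ ha _ _ hab =>
    hdec _ _ (insertCoord_mem_orthant_iff.2 ⟨hy, hh.trans_le ha⟩)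
      (insertCoord_le_insertCoord hab)
  calc _ ≤ ∫⁻ y in {y : {i : Fin n // i ≠ k} → ℝ | ∀ i, 0 < y i},
          ENNReal.ofReal ((μ / h) ^ p) * ∫⁻ u in Ioi h, F (insertCoord k u y) :=
        setLIntegral_mono' measurableSet_setOf_forall_pos fun y hy => by
          simpa only [F, insertCoord_add_smul_single] using
            (hanti y hy).lintegral_rpow_sub_dilate_le hp hμ hh
    _ ≤ ENNReal.ofReal ((μ / h) ^ p) * ∫⁻ y in {y : {i : Fin n // i ≠ k} → ℝ | ∀ i, 0 < y i},
          ∫⁻ u in Ioi 0, F (insertCoord k u y) := by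
        rw [lintegral_const_mul' _ _ ENNReal.ofReal_ne_top]
        gcongr
    _ = ENNReal.ofReal ((μ / h) ^ p) * ∫⁻ x in orthant n, F x := by
        rw [lintegral_orthant_eq_lintegral_insertCoord F hF]

end InsertCoordLemmas

theorem rpow_one_div_le_of_abs_le_rpow {a b p : ℝ} (hp : 0 < p) (hb : 0 ≤ b)
    (hab : |a| ≤ b ^ p) : a ^ (1 / p) ≤ b :=
  calc a ^ (1 / p) ≤ |a| ^ (1 / p) := (le_abs_self _).trans (Real.abs_rpow_le_abs_rpow _ _)
    _ ≤ (b ^ p) ^ (1 / p) := by gcongr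
    _ = b := by rw [← Real.rpow_mul hb, mul_one_div_cancel hp.ne', Real.rpow_one]

theorem stmt18_general (n : ℕ) (p : ℝ) (hp : 1 ≤ p)
    (f : (Fin n → ℝ) → ℝ)
    (hf : MemLp f (ENNReal.ofReal p) (volume.restrict (orthant n)))
    (hdec : ∀ x y : Fin n → ℝ, x ∈ orthant n → (∀ i, x i ≤ y i) → f y ≤ f x)
    (μ : ℝ) (hμ : 1 < μ) (k : Fin n) (h : ℝ) (hh : 0 < h) :
    (∫ y in {y : {i : Fin n // i ≠ k} → ℝ | ∀ i, 0 < y i},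
        ∫ u in Set.Ioi h,
          u ^ (-p) * (f (insertCoord k u y) - f (insertCoord k (μ * u) y)) ^ p) ^ (1 / p)
      ≤ 4 * μ * omegaOrth p f k h / h := by
  have hp0 : 0 < p := zero_lt_one.trans_le hp
  have hω : 0 ≤ omegaOrth p f k h := omegaOrth_nonneg h
  have hbound := calc
    ‖∫ y in {y : {i : Fin n // i ≠ k} → ℝ | ∀ i, 0 < y i}, ∫ u in Set.Ioi h,
        u ^ (-p) * (f (insertCoord k u y) - f (insertCoord k (μ * u) y)) ^ p‖ₑ
      ≤ ∫⁻ y in {y : {i : Fin n // i ≠ k} → ℝ | ∀ i, 0 < y i}, ∫⁻ u in Ioi h,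
          ‖u ^ (-p) * (f (insertCoord k u y) - f (insertCoord k (μ * u) y)) ^ p‖ₑ :=
        (enorm_integral_le_lintegral_enorm _).trans
          (lintegral_mono fun _ => enorm_integral_le_lintegral_enorm _)
    _ ≤ ENNReal.ofReal ((μ / h) ^ p) *
          ∫⁻ x in orthant n, ‖f (x + h • (Pi.single k 1 : Fin n → ℝ)) - f x‖ₑ ^ p :=
        lintegral_insertCoord_rpow_sub_dilate_le hp hf hdec hμ hh
    _ ≤ ENNReal.ofReal ((μ / h) ^ p) * ENNReal.ofReal (omegaOrth p f k h) ^ p := by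
        gcongr
        exact lintegral_translate_sub_rpow_le_omegaOrth hp hf hh.le
    _ = ENNReal.ofReal ((μ * omegaOrth p f k h / h) ^ p) := by
        rw [ENNReal.ofReal_rpow_of_nonneg hω hp0.le, ← ENNReal.ofReal_mul (by positivity),
          ← Real.mul_rpow (by positivity) hω, div_mul_eq_mul_div, mul_comm μ]
  rw [Real.enorm_eq_ofReal_abs, ENNReal.ofReal_le_ofReal_iff (by positivity)] at hbound
  calc _ ≤ μ * omegaOrth p f k h / h :=
        rpow_one_div_le_of_abs_le_rpow hp0 (by positivity) hbound
    _ ≤ 4 * μ * omegaOrth p f k h / h := by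
        gcongr
        linarith [mul_nonneg (zero_le_one.trans hμ.le) hω]

/-- Lemma 5.2: for nonnegative f ∈ L^p(ℝ₊^n), nonincreasing in each variable, μ > 1:
(∫∫_{u>h} u^{-p} [f(u,ŷ) − f(μu,ŷ)]^p du dŷ)^{1/p} ≤ 4μ ω_k(f;h)_p / h. -/
theorem stmt18 (n : ℕ) (hn : 2 ≤ n) (p : ℝ) (hp : 1 ≤ p)
    (f : (Fin n → ℝ) → ℝ)
    (hf : MemLp f (ENNReal.ofReal p) (volume.restrict (orthant n)))
    (hnn : ∀ x ∈ orthant n, 0 ≤ f x)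
    (hdec : ∀ x y : Fin n → ℝ, x ∈ orthant n → (∀ i, x i ≤ y i) → f y ≤ f x)
    (μ : ℝ) (hμ : 1 < μ) (k : Fin n) (h : ℝ) (hh : 0 < h) :
    (∫ y in {y : {i : Fin n // i ≠ k} → ℝ | ∀ i, 0 < y i},
        ∫ u in Set.Ioi h,
          u ^ (-p) * (f (insertCoord k u y) - f (insertCoord k (μ * u) y)) ^ p) ^ (1 / p)
      ≤ 4 * μ * omegaOrth p f k h / h :=
  stmt18_general n p hp f hf hdec μ hμ k h hh
end
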